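/- arXiv:2401.14156 — 2 statements merged into one kernel-verified Lean document; each statement's English description precedes it below -/
import Mathlib

section
/- Let ω be a modulus of continuity with lim_{t→∞} ω(t)=∞, let E ⊆ ℝⁿ be an arbitrary nonempty set, let V be a normed space, and let m ∈ ℕ∪{0}. If F ∈ VC_far^{m,ω}(ℝⁿ,V), then the restricted jet A = {D^k F|_E}_{k=0}^m belongs to VJ_far^{m,ω}(E,V). -/
open Filter Set Topology

noncomputable section

/-- `ℝⁿ` with the Euclidean norm. -/
abbrev Rn (n : ℕ) : Type := EuclideanSpace ℝ (Fin n)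

/-- `ω : (0,∞) → (0,∞)` is a modulus of continuity with constant `Cω`:
nondecreasing, positive, `ω(t) → 0` as `t → 0⁺`, and `s/ω(s) ≤ Cω · t/ω(t)` for `0 < s ≤ t`. -/
def IsModulus (ω : ℝ → ℝ) (Cω : ℝ) : Prop :=
  (∀ t : ℝ, 0 < t → 0 < ω t) ∧
  (∀ s t : ℝ, 0 < s → s ≤ t → ω s ≤ ω t) ∧
  Filter.Tendsto ω (nhdsWithin 0 (Set.Ioi 0)) (nhds 0) ∧
  (∀ s t : ℝ, 0 < s → s ≤ t → s / ω s ≤ Cω * (t / ω t))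

/-- Plug the vector `v` into `j` of the slots of a `(k+j)`-linear map. -/
def plugIn {n : ℕ} {V : Type*} [NormedAddCommGroup V] [NormedSpace ℝ V] (v : Rn n) :
    ∀ (j : ℕ) {k : ℕ},
      ContinuousMultilinearMap ℝ (fun _ : Fin (k + j) => Rn n) V →
      ContinuousMultilinearMap ℝ (fun _ : Fin k => Rn n) V
  | 0, _, T => T
  | j + 1, _, T => plugIn v j (T.curryLeft v)

/-- The set of Hölder ratios `‖g x − g y‖ / ω(‖x−y‖)` over distinct pairs in `E`. -/
def ratioSet {n : ℕ} {W : Type*} [NormedAddCommGroup W] (ω : ℝ → ℝ)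
    (g : Rn n → W) (E : Set (Rn n)) : Set ℝ :=
  {r | ∃ x ∈ E, ∃ y ∈ E, x ≠ y ∧ r = ‖g x - g y‖ / ω ‖x - y‖}

/-- `g ∈ C^{0,ω}(E,W)`. -/
def MemHolderOn {n : ℕ} {W : Type*} [NormedAddCommGroup W] (ω : ℝ → ℝ)
    (g : Rn n → W) (E : Set (Rn n)) : Prop :=
  BddAbove (ratioSet ω g E)

/-- The seminorm `‖g‖_{C^{0,ω}(E,W)}`. -/
def holderNormOn {n : ℕ} {W : Type*} [NormedAddCommGroup W] (ω : ℝ → ℝ)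
    (g : Rn n → W) (E : Set (Rn n)) : ℝ :=
  sSup (ratioSet ω g E)

/-- The Hölder ratio of `g` vanishes uniformly as `|x−y| → 0` (over pairs in `E`). -/
def VanishSmallOn {n : ℕ} {W : Type*} [NormedAddCommGroup W] (ω : ℝ → ℝ)
    (g : Rn n → W) (E : Set (Rn n)) : Prop :=
  ∀ ε : ℝ, 0 < ε → ∃ δ : ℝ, 0 < δ ∧ ∀ x ∈ E, ∀ y ∈ E, x ≠ y → ‖x - y‖ ≤ δ →
    ‖g x - g y‖ ≤ ε * ω ‖x - y‖

/-- The Hölder ratio of `g` vanishes uniformly as `|x−y| → ∞` (over pairs in `E`). -/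
def VanishLargeOn {n : ℕ} {W : Type*} [NormedAddCommGroup W] (ω : ℝ → ℝ)
    (g : Rn n → W) (E : Set (Rn n)) : Prop :=
  ∀ ε : ℝ, 0 < ε → ∃ K : ℝ, ∀ x ∈ E, ∀ y ∈ E, x ≠ y → K ≤ ‖x - y‖ →
    ‖g x - g y‖ ≤ ε * ω ‖x - y‖

/-- The Hölder ratio of `g` vanishes uniformly as `min(|x|,|y|) → ∞` (over pairs in `E`). -/
def VanishFarOn {n : ℕ} {W : Type*} [NormedAddCommGroup W] (ω : ℝ → ℝ)
    (g : Rn n → W) (E : Set (Rn n)) : Prop :=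
  ∀ ε : ℝ, 0 < ε → ∃ K : ℝ, ∀ x ∈ E, ∀ y ∈ E, x ≠ y → K ≤ min ‖x‖ ‖y‖ →
    ‖g x - g y‖ ≤ ε * ω ‖x - y‖

/-- `R(A,x,y)`: the Taylor-remainder quantity of an `m`-jet at distinct points `x, y`. -/
def jetR {n : ℕ} {V : Type*} [NormedAddCommGroup V] [NormedSpace ℝ V]
    (A : Rn n → FormalMultilinearSeries ℝ (Rn n) V) (m : ℕ) (x y : Rn n) : ℝ :=
  (Finset.range (m + 1)).sup' ⟨0, Finset.mem_range.mpr (Nat.succ_pos m)⟩ fun k =>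
    ‖A x k - ∑ j ∈ Finset.range (m - k + 1),
        (j.factorial : ℝ)⁻¹ • plugIn (x - y) j (A y (k + j))‖ / ‖x - y‖ ^ (m - k)

/-- The set of ratios `R(A,x,y)/ω(|x−y|)` over distinct pairs in `E`. -/
def jetRatioSet {n : ℕ} {V : Type*} [NormedAddCommGroup V] [NormedSpace ℝ V] (ω : ℝ → ℝ)
    (A : Rn n → FormalMultilinearSeries ℝ (Rn n) V) (m : ℕ) (E : Set (Rn n)) : Set ℝ :=
  {r | ∃ x ∈ E, ∃ y ∈ E, x ≠ y ∧ r = jetR A m x y / ω ‖x - y‖}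

/-- Each component `A_k`, `k ≤ m`, of the jet is a symmetric multilinear map on `E`. -/
def JetSymmOn {n : ℕ} {V : Type*} [NormedAddCommGroup V] [NormedSpace ℝ V]
    (A : Rn n → FormalMultilinearSeries ℝ (Rn n) V) (m : ℕ) (E : Set (Rn n)) : Prop :=
  ∀ x ∈ E, ∀ k ≤ m, ∀ (σ : Equiv.Perm (Fin k)) (v : Fin k → Rn n),
    A x k (fun i => v (σ i)) = A x k v

/-- `A ∈ J^{m,ω}(E,V)`: a symmetric `m`-jet on `E` with finite jet seminorm. -/
def MemJetOn {n : ℕ} {V : Type*} [NormedAddCommGroup V] [NormedSpace ℝ V] (ω : ℝ → ℝ)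
    (A : Rn n → FormalMultilinearSeries ℝ (Rn n) V) (m : ℕ) (E : Set (Rn n)) : Prop :=
  JetSymmOn A m E ∧ BddAbove (jetRatioSet ω A m E)

/-- The jet seminorm `‖A‖_{J^{m,ω}(E,V)}`. -/
def jetNormOn {n : ℕ} {V : Type*} [NormedAddCommGroup V] [NormedSpace ℝ V] (ω : ℝ → ℝ)
    (A : Rn n → FormalMultilinearSeries ℝ (Rn n) V) (m : ℕ) (E : Set (Rn n)) : ℝ :=
  sSup (jetRatioSet ω A m E)

/-- `R(A,x,y)/ω(|x−y|)` vanishes uniformly as `|x−y| → 0`. -/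
def JetVanishSmallOn {n : ℕ} {V : Type*} [NormedAddCommGroup V] [NormedSpace ℝ V] (ω : ℝ → ℝ)
    (A : Rn n → FormalMultilinearSeries ℝ (Rn n) V) (m : ℕ) (E : Set (Rn n)) : Prop :=
  ∀ ε : ℝ, 0 < ε → ∃ δ : ℝ, 0 < δ ∧ ∀ x ∈ E, ∀ y ∈ E, x ≠ y → ‖x - y‖ ≤ δ →
    jetR A m x y ≤ ε * ω ‖x - y‖

/-- `R(A,x,y)/ω(|x−y|)` vanishes uniformly as `|x−y| → ∞`. -/
def JetVanishLargeOn {n : ℕ} {V : Type*} [NormedAddCommGroup V] [NormedSpace ℝ V] (ω : ℝ → ℝ)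
    (A : Rn n → FormalMultilinearSeries ℝ (Rn n) V) (m : ℕ) (E : Set (Rn n)) : Prop :=
  ∀ ε : ℝ, 0 < ε → ∃ K : ℝ, ∀ x ∈ E, ∀ y ∈ E, x ≠ y → K ≤ ‖x - y‖ →
    jetR A m x y ≤ ε * ω ‖x - y‖

/-- `R(A,x,y)/ω(|x−y|)` vanishes uniformly as `min(|x|,|y|) → ∞`. -/
def JetVanishFarOn {n : ℕ} {V : Type*} [NormedAddCommGroup V] [NormedSpace ℝ V] (ω : ℝ → ℝ)
    (A : Rn n → FormalMultilinearSeries ℝ (Rn n) V) (m : ℕ) (E : Set (Rn n)) : Prop :=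
  ∀ ε : ℝ, 0 < ε → ∃ K : ℝ, ∀ x ∈ E, ∀ y ∈ E, x ≠ y → K ≤ min ‖x‖ ‖y‖ →
    jetR A m x y ≤ ε * ω ‖x - y‖

/-- `F` extends the `m`-jet `A` on `E`: `D^k F = A_k` on `E` for `k = 0,…,m`. -/
def ExtendsJetOn {n : ℕ} {V : Type*} [NormedAddCommGroup V] [NormedSpace ℝ V]
    (F : Rn n → V) (A : Rn n → FormalMultilinearSeries ℝ (Rn n) V) (m : ℕ)
    (E : Set (Rn n)) : Prop :=
  ∀ y ∈ E, ∀ k ≤ m, iteratedFDeriv ℝ k F y = A y k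

/-- `F ∈ C^{m,ω}(ℝⁿ,V)`. -/
def MemCmOmega {n : ℕ} {V : Type*} [NormedAddCommGroup V] [NormedSpace ℝ V] (ω : ℝ → ℝ)
    (F : Rn n → V) (m : ℕ) : Prop :=
  ContDiff ℝ m F ∧ MemHolderOn ω (iteratedFDeriv ℝ m F) Set.univ

section Piece1
variable {n : ℕ} {V : Type*} [NormedAddCommGroup V] [NormedSpace ℝ V]

lemma plugIn_apply (v : Rn n) : ∀ (j k : ℕ)
    (T : ContinuousMultilinearMap ℝ (fun _ : Fin (k + j) => Rn n) V) (w : Fin k → Rn n),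
    plugIn v j T w =
      T (fun a => if h : (a : ℕ) < j then v else
          w ⟨(a : ℕ) - j, by have := a.isLt; omega⟩) := by
  intro j
  induction j with
  | zero =>
    intro k T w
    show T w = _
    refine congrArg (⇑T) (funext fun a => ?_)
    rw [dif_neg (Nat.not_lt_zero _)]
    exact congrArg w (Fin.ext (Nat.sub_zero _).symm)
  | succ j ih =>
    intro k T w
    have main : ∀ a : Fin (k + j + 1),
        (Fin.cons v (fun a' : Fin (k + j) => if h : (a' : ℕ) < j then v else
          w ⟨(a' : ℕ) - j, by have := a'.isLt; omega⟩) : Fin (k + j + 1) → Rn n) a =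
        if h : (a : ℕ) < j + 1 then v else
          w ⟨(a : ℕ) - (j + 1), by have := a.isLt; omega⟩ := by
      intro a
      refine Fin.cases ?_ ?_ a
      · rw [Fin.cons_zero, dif_pos (by simp only [Fin.val_zero]; omega)]
      · intro b
        rw [Fin.cons_succ]
        by_cases hb : (b : ℕ) < j
        · rw [dif_pos hb, dif_pos (by simp only [Fin.val_succ]; omega)]
        · rw [dif_neg hb, dif_neg (by simp only [Fin.val_succ]; omega)]
          exact congrArg w (Fin.ext (by simp only [Fin.val_mk, Fin.val_succ]; omega))
    exact (ih k (T.curryLeft v) w).trans (congrArg (⇑T) (funext main))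

lemma curryLeft_plugIn (v : Rn n) (i k : ℕ)
    (T : ContinuousMultilinearMap ℝ (fun _ : Fin (k + 1 + i) => Rn n) V)
    (T' : ContinuousMultilinearMap ℝ (fun _ : Fin (k + (i + 1)) => Rn n) V)
    (hTT' : ∀ z : Fin (k + (i + 1)) → Rn n,
      T' z = T (fun a => z (Fin.cast (by omega) a))) :
    (plugIn v i T).curryLeft v = plugIn v (i + 1) T' := by
  ext w
  have lhs : (plugIn v i T).curryLeft v w = plugIn v i T (Fin.cons v w) := rfl
  rw [lhs, plugIn_apply, plugIn_apply, hTT']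
  refine congrArg (⇑T) (funext fun a => ?_)
  have hacast : ((Fin.cast (by omega : k + 1 + i = k + (i + 1)) a : Fin (k + (i + 1))) : ℕ)
      = (a : ℕ) := rfl
  by_cases h1 : (a : ℕ) < i
  · rw [dif_pos h1, dif_pos (by rw [hacast]; omega)]
  · rw [dif_neg h1]
    by_cases h2 : (a : ℕ) = i
    · have h0 : (⟨(a : ℕ) - i, by have := a.isLt; omega⟩ : Fin (k + 1)) = 0 :=
        Fin.ext (by simp only [Fin.val_mk, Fin.val_zero]; omega)
      rw [h0, Fin.cons_zero, dif_pos (by rw [hacast]; omega)]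
    · have hs : (⟨(a : ℕ) - i, by have := a.isLt; omega⟩ : Fin (k + 1)) =
          Fin.succ ⟨(a : ℕ) - i - 1, by have := a.isLt; omega⟩ :=
        Fin.ext (by simp only [Fin.val_mk, Fin.val_succ]; omega)
      rw [hs, Fin.cons_succ, dif_neg (by rw [hacast]; omega)]
      exact congrArg w (Fin.ext (by simp only [Fin.val_mk, hacast]; omega))

lemma norm_curryLeft_apply_le {k : ℕ}
    (X : ContinuousMultilinearMap ℝ (fun _ : Fin (k + 1) => Rn n) V) (v : Rn n) :
    ‖X.curryLeft v‖ ≤ ‖X‖ * ‖v‖ := by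
  calc ‖X.curryLeft v‖ ≤ ‖X.curryLeft‖ * ‖v‖ := X.curryLeft.le_opNorm v
  _ = ‖X‖ * ‖v‖ := by rw [ContinuousMultilinearMap.curryLeft_norm]

end Piece1

section Piece2
variable {n m : ℕ} {V : Type*} [NormedAddCommGroup V] [NormedSpace ℝ V] {F : Rn n → V}

lemma itfd_fix0 {k' : ℕ} (x : Rn n)
    (IH : ∀ (τ : Equiv.Perm (Fin k')) (ξ : Rn n) (w : Fin k' → Rn n),
      iteratedFDeriv ℝ k' F ξ (fun i => w (τ i)) = iteratedFDeriv ℝ k' F ξ w)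
    (σ : Equiv.Perm (Fin (k' + 1))) (hσ : σ 0 = 0) (v : Fin (k' + 1) → Rn n) :
    iteratedFDeriv ℝ (k' + 1) F x (fun i => v (σ i)) = iteratedFDeriv ℝ (k' + 1) F x v := by
  classical
  set pe := Equiv.Perm.decomposeFin σ with hpe
  have hσeq : σ = Equiv.Perm.decomposeFin.symm pe :=
    (Equiv.symm_apply_apply Equiv.Perm.decomposeFin σ).symm
  have hp : pe.1 = 0 := by
    rw [← hσ, hσeq]
    exact (Equiv.Perm.decomposeFin_symm_apply_zero pe.1 pe.2).symm
  have hpe2 : pe = (0, pe.2) := Prod.ext hp rfl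
  have hsucc : ∀ i : Fin k', σ i.succ = (pe.2 i).succ := by
    intro i
    rw [hσeq, hpe2, Equiv.Perm.decomposeFin_symm_apply_succ, Equiv.swap_self]
    rfl
  -- the domDomCongr invariance of the fderiv
  have hdc : ∀ (u : Rn n) (w : Fin k' → Rn n),
      fderiv ℝ (iteratedFDeriv ℝ k' F) x u (fun i => w (pe.2 i)) =
      fderiv ℝ (iteratedFDeriv ℝ k' F) x u w := by
    intro u w
    have hfun : (⇑(ContinuousMultilinearMap.domDomCongrₗᵢ ℝ (Rn n) V pe.2)) ∘
        (iteratedFDeriv ℝ k' F) = iteratedFDeriv ℝ k' F := by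
      funext ξ
      exact ContinuousMultilinearMap.ext fun z => IH pe.2 ξ z
    have hco := LinearIsometryEquiv.comp_fderiv
      (ContinuousMultilinearMap.domDomCongrₗᵢ ℝ (Rn n) V pe.2)
      (f := iteratedFDeriv ℝ k' F) (x := x)
    rw [hfun] at hco
    have h2 : (ContinuousMultilinearMap.domDomCongrₗᵢ ℝ (Rn n) V pe.2)
        (fderiv ℝ (iteratedFDeriv ℝ k' F) x u) = fderiv ℝ (iteratedFDeriv ℝ k' F) x u := by
      have := (DFunLike.congr_fun hco u).symm
      exact this
    have h1 : (ContinuousMultilinearMap.domDomCongrₗᵢ ℝ (Rn n) V pe.2)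
        (fderiv ℝ (iteratedFDeriv ℝ k' F) x u) w =
        fderiv ℝ (iteratedFDeriv ℝ k' F) x u (fun i => w (pe.2 i)) := rfl
    exact h1.symm.trans (DFunLike.congr_fun h2 w)
  show fderiv ℝ (iteratedFDeriv ℝ k' F) x (v (σ 0)) (fun i => v (σ (Fin.succ i))) =
      fderiv ℝ (iteratedFDeriv ℝ k' F) x (v 0) (fun i => v (Fin.succ i))
  rw [hσ]
  have hts : (fun i => v (σ (Fin.succ i))) = fun i => (fun j => v (Fin.succ j)) (pe.2 i) := by
    funext i
    exact congrArg v (hsucc i)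
  rw [hts]
  exact hdc (v 0) (fun j => v (Fin.succ j))

lemma itfd_swap01 {k'' : ℕ} (hF : ContDiff ℝ m F) (hk : k'' + 2 ≤ m) (x : Rn n)
    (v : Fin (k'' + 2) → Rn n) :
    iteratedFDeriv ℝ (k'' + 2) F x (fun i => v (Equiv.swap 0 1 i)) =
      iteratedFDeriv ℝ (k'' + 2) F x v := by
  set g := iteratedFDeriv ℝ k'' F with hg
  have hg2 : ContDiff ℝ 2 g := hF.iteratedFDeriv_right (by exact_mod_cast (by omega : 2 + k'' ≤ m))
  have hdiff : ∀ ξ, HasFDerivAt g (fderiv ℝ g ξ) ξ := fun ξ =>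
    ((hg2.differentiable (by norm_num)) ξ).hasFDerivAt
  have hd2 : DifferentiableAt ℝ (fderiv ℝ g) x :=
    ((hg2.fderiv_right (m := 1) (by norm_num)).differentiable one_ne_zero) x
  have hsym := second_derivative_symmetric hdiff hd2.hasFDerivAt (v 1) (v 0)
  have hrepr : ∀ w : Fin (k'' + 2) → Rn n, iteratedFDeriv ℝ (k'' + 2) F x w =
      fderiv ℝ (fderiv ℝ g) x (w 0) (w 1) (Fin.tail (Fin.tail w)) := by
    intro w
    have h1 : iteratedFDeriv ℝ (k'' + 2) F x w =
        fderiv ℝ (iteratedFDeriv ℝ (k'' + 1) F) x (w 0) (Fin.tail w) := rfl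
    set L := ((continuousMultilinearCurryLeftEquiv ℝ (fun _ : Fin (k'' + 1) => Rn n) V
        ).symm.toContinuousLinearEquiv.toContinuousLinearMap) with hLdef
    have h4 : fderiv ℝ (iteratedFDeriv ℝ (k'' + 1) F) x = L.comp (fderiv ℝ (fderiv ℝ g) x) := by
      rw [iteratedFDeriv_succ_eq_comp_left]
      exact ContinuousLinearEquiv.comp_fderiv (𝕜 := ℝ) (E := Rn n →L[ℝ] ContinuousMultilinearMap ℝ (fun _ : Fin k'' => Rn n) V) (F := ContinuousMultilinearMap ℝ (fun _ : Fin (k'' + 1) => Rn n) V) (G := Rn n) (continuousMultilinearCurryLeftEquiv ℝ (fun _ : Fin (k'' + 1) => Rn n) V).symm.toContinuousLinearEquiv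
    rw [h1, h4]
    have h5 : Fin.tail w 0 = w 1 := congrArg w Fin.succ_zero_eq_one
    show fderiv ℝ (fderiv ℝ g) x (w 0) (Fin.tail w 0) (Fin.tail (Fin.tail w)) =
      fderiv ℝ (fderiv ℝ g) x (w 0) (w 1) (Fin.tail (Fin.tail w))
    rw [h5]
  rw [hrepr, hrepr]
  have et : Fin.tail (Fin.tail (fun i => v (Equiv.swap 0 1 i))) = Fin.tail (Fin.tail v) := by
    funext i
    show v (Equiv.swap 0 1 i.succ.succ) = v i.succ.succ
    refine congrArg v (Equiv.swap_apply_of_ne_of_ne (Fin.succ_ne_zero _) ?_)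
    rw [← Fin.succ_zero_eq_one]
    exact fun h => (Fin.succ_ne_zero i) (Fin.succ_injective _ h)
  rw [Equiv.swap_apply_left, Equiv.swap_apply_right, et]
  exact DFunLike.congr_fun hsym (Fin.tail (Fin.tail v))

lemma itfd_symm (hF : ContDiff ℝ m F) : ∀ k, k ≤ m → ∀ (x : Rn n) (σ : Equiv.Perm (Fin k))
    (v : Fin k → Rn n),
    iteratedFDeriv ℝ k F x (fun i => v (σ i)) = iteratedFDeriv ℝ k F x v := by
  intro k
  induction k with
  | zero =>
    intro _ x σ v
    exact congrArg _ (funext fun i => i.elim0)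
  | succ k' IH =>
    intro hk x σ v
    have IH' : ∀ (τ : Equiv.Perm (Fin k')) (ξ : Rn n) (w : Fin k' → Rn n),
        iteratedFDeriv ℝ k' F ξ (fun i => w (τ i)) = iteratedFDeriv ℝ k' F ξ w :=
      fun τ ξ w => IH (le_trans (Nat.le_succ k') hk) ξ τ w
    have tail_case : ∀ (σ : Equiv.Perm (Fin (k' + 1))), σ 0 = 0 → ∀ v,
        iteratedFDeriv ℝ (k' + 1) F x (fun i => v (σ i)) = iteratedFDeriv ℝ (k' + 1) F x v :=
      fun σ h v => itfd_fix0 x IH' σ h v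
    have zcase : ∀ b : Fin (k' + 1), b ≠ 0 → ∀ v : Fin (k' + 1) → Rn n,
        iteratedFDeriv ℝ (k' + 1) F x (fun i => v (Equiv.swap 0 b i)) =
          iteratedFDeriv ℝ (k' + 1) F x v := by
      intro b hb v
      rcases Nat.eq_zero_or_pos k' with hk0 | hpos
      · subst hk0
        exact absurd (Fin.ext (by have := b.isLt; simp only [Fin.val_zero]; omega)) hb
      · obtain ⟨k'', rfl⟩ : ∃ k'', k' = k'' + 1 := ⟨k' - 1, by omega⟩
        by_cases hb1 : b = 1
        · subst hb1
          exact itfd_swap01 hF hk x v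
        · have h01 : (0 : Fin (k'' + 2)) ≠ 1 := by
            intro h
            exact absurd (congrArg Fin.val h) (by simp)
          have hc0 : Equiv.swap (1 : Fin (k'' + 2)) b 0 = 0 :=
            Equiv.swap_apply_of_ne_of_ne h01 (Ne.symm hb)
          have hswap : Equiv.swap (0 : Fin (k'' + 2)) b =
              (Equiv.swap 1 b) * (Equiv.swap 0 1) * (Equiv.swap 1 b)⁻¹ := by
            have h := Equiv.swap_apply_apply (Equiv.swap (1 : Fin (k'' + 2)) b) 0 1
            rw [hc0, Equiv.swap_apply_left] at h
            exact h
          have e1 : ∀ w : Fin (k'' + 2) → Rn n,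
              iteratedFDeriv ℝ (k'' + 2) F x (fun i => w (Equiv.swap 1 b i)) =
                iteratedFDeriv ℝ (k'' + 2) F x w :=
            fun w => tail_case (Equiv.swap 1 b) hc0 w
          have e2 : ∀ w : Fin (k'' + 2) → Rn n,
              iteratedFDeriv ℝ (k'' + 2) F x (fun i => w (Equiv.swap 0 1 i)) =
                iteratedFDeriv ℝ (k'' + 2) F x w :=
            fun w => itfd_swap01 hF hk x w
          have key : (fun i => v (Equiv.swap 0 b i)) =
              fun i => v (Equiv.swap 1 b (Equiv.swap 0 1 (Equiv.swap 1 b i))) := by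
            funext i
            refine congrArg v ?_
            rw [hswap]
            simp only [Equiv.swap_inv, Equiv.Perm.mul_apply]
          rw [key]
          exact ((e1 (fun j => v (Equiv.swap 1 b (Equiv.swap 0 1 j)))).trans
            ((e2 (fun j => v (Equiv.swap 1 b j))).trans (e1 v)))
    have swap_case : ∀ (a b : Fin (k' + 1)), a ≠ b → ∀ v : Fin (k' + 1) → Rn n,
        iteratedFDeriv ℝ (k' + 1) F x (fun i => v (Equiv.swap a b i)) =
          iteratedFDeriv ℝ (k' + 1) F x v := by
      intro a b hab v
      by_cases ha : a = 0
      · subst ha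
        exact zcase b (Ne.symm hab) v
      · by_cases hb : b = 0
        · subst hb
          rw [show Equiv.swap a 0 = Equiv.swap 0 a from Equiv.swap_comm a 0]
          exact zcase a ha v
        · exact tail_case (Equiv.swap a b)
            (Equiv.swap_apply_of_ne_of_ne (Ne.symm ha) (Ne.symm hb)) v
    have main : ∀ (σ : Equiv.Perm (Fin (k' + 1))) (v : Fin (k' + 1) → Rn n),
        iteratedFDeriv ℝ (k' + 1) F x (fun i => v (σ i)) = iteratedFDeriv ℝ (k' + 1) F x v := by
      intro σ
      refine Equiv.Perm.swap_induction_on σ ?_ ?_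
      · intro v
        exact congrArg _ (funext fun i => rfl)
      · intro π a b hab hπ v
        have h1 : (fun i => v ((Equiv.swap a b * π) i)) =
            fun i => (fun j => v (Equiv.swap a b j)) (π i) := by
          funext i
          exact congrArg v (Equiv.Perm.mul_apply _ _ _)
        rw [h1, hπ (fun j => v (Equiv.swap a b j))]
        exact swap_case a b hab v
    exact main σ v

end Piece2

section Piece3
variable {n m : ℕ} {V : Type*} [NormedAddCommGroup V] [NormedSpace ℝ V] {F : Rn n → V}

@[simp] lemma plugIn_zero (v : Rn n) {k : ℕ}
    (T : ContinuousMultilinearMap ℝ (fun _ : Fin (k + 0) => Rn n) V) : plugIn v 0 T = T := rfl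

lemma itfd_nat_congr (F : Rn n → V) (y : Rn n) {a b : ℕ} (h : a = b) (z : Fin b → Rn n) :
    iteratedFDeriv ℝ b F y z = iteratedFDeriv ℝ a F y (fun i => z (Fin.cast h i)) := by
  subst h; rfl

lemma taylor_segment (hF : ContDiff ℝ m F) (x y : Rn n) {B : ℝ}
    (hB : ∀ t ∈ Icc (0:ℝ) 1,
      ‖iteratedFDeriv ℝ m F (y + t • (x - y)) - iteratedFDeriv ℝ m F y‖ ≤ B) :
    ∀ p k, k + p = m → ∀ t ∈ Icc (0:ℝ) 1,
      ‖iteratedFDeriv ℝ k F (y + t • (x - y)) -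
        ∑ j ∈ Finset.range (p + 1), ((j.factorial : ℝ)⁻¹ * t ^ j) •
          plugIn (x - y) j (iteratedFDeriv ℝ (k + j) F y)‖ ≤ B * (t * ‖x - y‖) ^ p := by
  have hB0 : 0 ≤ B := by
    have := hB 0 ⟨le_refl 0, zero_le_one⟩
    simpa using this
  intro p
  induction p with
  | zero =>
    intro k hk t ht
    have hk' : k = m := by omega
    subst hk'
    have h1 := hB t ht
    simpa [Finset.sum_range_one] using h1
  | succ p ih =>
    intro k hk t ht
    have hkm : k < m := by omega
    have hdiffk : Differentiable ℝ (iteratedFDeriv ℝ k F) :=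
      hF.differentiable_iteratedFDeriv (by exact_mod_cast hkm)
    set v : Rn n := x - y with hv
    set C : (j : ℕ) → ContinuousMultilinearMap ℝ (fun _ : Fin k => Rn n) V :=
      fun j => plugIn v j (iteratedFDeriv ℝ (k + j) F y) with hC
    set g : ℝ → ContinuousMultilinearMap ℝ (fun _ : Fin k => Rn n) V := fun s =>
      iteratedFDeriv ℝ k F (y + s • v) -
        ∑ j ∈ Finset.range (p + 2), ((j.factorial : ℝ)⁻¹ * s ^ j) • C j with hgdef
    set hh : ℝ → ContinuousMultilinearMap ℝ (fun _ : Fin (k + 1) => Rn n) V := fun s =>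
      iteratedFDeriv ℝ (k + 1) F (y + s • v) -
        ∑ i ∈ Finset.range (p + 1), ((i.factorial : ℝ)⁻¹ * s ^ i) •
          plugIn v i (iteratedFDeriv ℝ (k + 1 + i) F y) with hhdef
    have hCsucc : ∀ i : ℕ,
        (plugIn v i (iteratedFDeriv ℝ (k + 1 + i) F y)).curryLeft v = C (i + 1) :=
      fun i => curryLeft_plugIn v i k _ _ (fun z => itfd_nat_congr F y (by omega) z)
    have hform : ∀ s : ℝ, (hh s).curryLeft v =
        (iteratedFDeriv ℝ (k + 1) F (y + s • v)).curryLeft v -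
        ∑ i ∈ Finset.range (p + 1), ((i.factorial : ℝ)⁻¹ * s ^ i) • C (i + 1) := by
      intro s
      ext w
      simp only [hhdef, ContinuousMultilinearMap.curryLeft_apply,
        ContinuousMultilinearMap.sub_apply, ContinuousMultilinearMap.sum_apply,
        ContinuousMultilinearMap.smul_apply]
      congr 1
      refine Finset.sum_congr rfl fun i _ => ?_
      congr 1
      exact DFunLike.congr_fun (hCsucc i) w
    have hgderiv : ∀ s : ℝ, HasDerivAt g ((hh s).curryLeft v) s := by
      intro s
      rw [hform s]
      have hline : HasDerivAt (fun r : ℝ => y + r • v) v s := by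
        simpa using ((hasDerivAt_id s).smul_const v).const_add y
      have hfd : HasFDerivAt (iteratedFDeriv ℝ k F)
          (fderiv ℝ (iteratedFDeriv ℝ k F) (y + s • v)) (y + s • v) :=
        (hdiffk (y + s • v)).hasFDerivAt
      have ha := hfd.comp_hasDerivAt s hline
      have hid : fderiv ℝ (iteratedFDeriv ℝ k F) (y + s • v) v =
          (iteratedFDeriv ℝ (k + 1) F (y + s • v)).curryLeft v := by
        ext w
        show _ = iteratedFDeriv ℝ (k + 1) F (y + s • v) (Fin.cons v w)
        rw [iteratedFDeriv_succ_apply_left, Fin.cons_zero, Fin.tail_cons]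
      rw [hid] at ha
      have hb : HasDerivAt
          (fun r : ℝ => ∑ j ∈ Finset.range (p + 2), ((j.factorial : ℝ)⁻¹ * r ^ j) • C j)
          (∑ j ∈ Finset.range (p + 2), ((j.factorial : ℝ)⁻¹ * ((j : ℝ) * s ^ (j - 1))) • C j)
          s := by
        refine HasDerivAt.fun_sum fun j _ => ?_
        exact ((hasDerivAt_pow j s).const_mul ((j.factorial : ℝ)⁻¹)).smul_const (C j)
      have hsum_eq :
          ∑ j ∈ Finset.range (p + 2), ((j.factorial : ℝ)⁻¹ * ((j : ℝ) * s ^ (j - 1))) • C j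
          = ∑ i ∈ Finset.range (p + 1), ((i.factorial : ℝ)⁻¹ * s ^ i) • C (i + 1) := by
        rw [Finset.sum_range_succ']
        have h0 : ((Nat.factorial 0 : ℝ)⁻¹ * (((0:ℕ) : ℝ) * s ^ (0 - 1))) • C 0 = 0 := by
          simp
        rw [h0, add_zero]
        refine Finset.sum_congr rfl fun i _ => ?_
        congr 1
        have hne : (i.factorial : ℝ) ≠ 0 := Nat.cast_ne_zero.mpr (Nat.factorial_ne_zero i)
        rw [Nat.factorial_succ]
        push_cast
        field_simp
      rw [hsum_eq] at hb
      exact ha.sub hb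
    have hg0 : g 0 = 0 := by
      have hsum0 : ∑ j ∈ Finset.range (p + 2), ((j.factorial : ℝ)⁻¹ * (0:ℝ) ^ j) • C j
          = C 0 := by
        refine (Finset.sum_eq_single_of_mem 0 (Finset.mem_range.mpr (by omega))
          (fun j _ hj => by rw [zero_pow hj, mul_zero, zero_smul])).trans (by simp)
      have hC0 : C 0 = iteratedFDeriv ℝ k F y := rfl
      show iteratedFDeriv ℝ k F (y + (0:ℝ) • v) -
        ∑ j ∈ Finset.range (p + 2), ((j.factorial : ℝ)⁻¹ * (0:ℝ) ^ j) • C j = 0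
      rw [hsum0, hC0, zero_smul, add_zero, sub_self]
    have ht0 : (0:ℝ) ≤ t := ht.1
    have ht1 : t ≤ 1 := ht.2
    have hvnn : (0:ℝ) ≤ ‖v‖ := norm_nonneg v
    have hbound : ∀ s ∈ Ico (0:ℝ) t, ‖(hh s).curryLeft v‖ ≤ B * (t * ‖v‖) ^ p * ‖v‖ := by
      intro s hs
      have hs1 : s ∈ Icc (0:ℝ) 1 := ⟨hs.1, le_trans (le_of_lt hs.2) ht1⟩
      have hih := ih (k + 1) (by omega) s hs1
      refine le_trans (norm_curryLeft_apply_le _ v) ?_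
      refine mul_le_mul_of_nonneg_right (le_trans hih ?_) hvnn
      refine mul_le_mul_of_nonneg_left
        (pow_le_pow_left₀ (mul_nonneg hs.1 hvnn)
          (mul_le_mul_of_nonneg_right (le_of_lt hs.2) hvnn) p) hB0
    have hmv := norm_image_sub_le_of_norm_deriv_le_segment'
      (fun s _ => (hgderiv s).hasDerivWithinAt) hbound t (right_mem_Icc.mpr ht0)
    rw [hg0, sub_zero] at hmv
    have hfinal : B * (t * ‖v‖) ^ p * ‖v‖ * (t - 0) = B * (t * ‖v‖) ^ (p + 1) := by
      rw [sub_zero, pow_succ]; ring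
    show ‖g t‖ ≤ B * (t * ‖v‖) ^ (p + 1)
    exact hfinal ▸ hmv

lemma jetR_le_of_bound (hF : ContDiff ℝ m F) (x y : Rn n) (hxy : x ≠ y) {B : ℝ}
    (hB : ∀ t ∈ Icc (0:ℝ) 1,
      ‖iteratedFDeriv ℝ m F (y + t • (x - y)) - iteratedFDeriv ℝ m F y‖ ≤ B) :
    jetR (ftaylorSeries ℝ F) m x y ≤ B := by
  have hxy' : (0:ℝ) < ‖x - y‖ := by
    rw [norm_pos_iff]
    exact sub_ne_zero.mpr hxy
  unfold jetR
  refine Finset.sup'_le _ _ fun k hk => ?_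
  have hkm : k ≤ m := by
    have := Finset.mem_range.mp hk
    omega
  have htay := taylor_segment hF x y hB (m - k) k (by omega) 1 ⟨zero_le_one, le_refl 1⟩
  rw [div_le_iff₀ (pow_pos hxy' _)]
  have h1 : y + (1:ℝ) • (x - y) = x := by rw [one_smul]; abel
  rw [h1] at htay
  simp only [one_pow, mul_one, one_mul] at htay
  exact htay

end Piece3

section Piece4
variable {n m : ℕ} {V : Type*} [NormedAddCommGroup V] [NormedSpace ℝ V] {F : Rn n → V}

lemma holder_segment_bound {ω : ℝ → ℝ}
    (hωpos : ∀ t : ℝ, 0 < t → 0 < ω t)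
    (hωmono : ∀ s t : ℝ, 0 < s → s ≤ t → ω s ≤ ω t)
    {c : ℝ} (hc : 0 ≤ c) (x y : Rn n) (hxy : x ≠ y)
    (h : ∀ t ∈ Icc (0:ℝ) 1, y + t • (x - y) ≠ y →
      ‖iteratedFDeriv ℝ m F (y + t • (x - y)) - iteratedFDeriv ℝ m F y‖ ≤
        c * ω ‖(y + t • (x - y)) - y‖) :
    ∀ t ∈ Icc (0:ℝ) 1,
      ‖iteratedFDeriv ℝ m F (y + t • (x - y)) - iteratedFDeriv ℝ m F y‖ ≤ c * ω ‖x - y‖ := by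
  intro t ht
  have hxy' : (0:ℝ) < ‖x - y‖ := by rw [norm_pos_iff]; exact sub_ne_zero.mpr hxy
  by_cases hξ : y + t • (x - y) = y
  · rw [hξ, sub_self, norm_zero]
    exact mul_nonneg hc (le_of_lt (hωpos _ hxy'))
  · refine le_trans (h t ht hξ) (mul_le_mul_of_nonneg_left (hωmono _ _ ?_ ?_) hc)
    · rw [norm_pos_iff]
      exact sub_ne_zero.mpr hξ
    · rw [add_sub_cancel_left, norm_smul, Real.norm_eq_abs, abs_of_nonneg ht.1]
      exact mul_le_of_le_one_left (norm_nonneg _) ht.2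

lemma seg_dist_le (x y : Rn n) {t : ℝ} (ht : t ∈ Icc (0:ℝ) 1) :
    ‖(y + t • (x - y)) - y‖ ≤ ‖x - y‖ := by
  rw [add_sub_cancel_left, norm_smul, Real.norm_eq_abs, abs_of_nonneg ht.1]
  exact mul_le_of_le_one_left (norm_nonneg _) ht.2

end Piece4


/-- if `ω(t) → ∞` as `t → ∞` and `F ∈ VC_far^{m,ω}(ℝⁿ,V)`, then the restricted
jet `{D^k F|_E}_{k=0}^m` belongs to `VJ_far^{m,ω}(E,V)`. -/
theorem restricted_jet_vanish_far {n m : ℕ} {V : Type*} [NormedAddCommGroup V]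
    [NormedSpace ℝ V] (ω : ℝ → ℝ) (Cω : ℝ) (hCω : 0 < Cω) (hω : IsModulus ω Cω)
    (hcoer : Filter.Tendsto ω Filter.atTop Filter.atTop)
    (E : Set (Rn n)) (hE : E.Nonempty) (F : Rn n → V)
    (hF : MemCmOmega ω F m)
    (hFfar : VanishFarOn ω (iteratedFDeriv ℝ m F) Set.univ) :
    MemJetOn ω (ftaylorSeries ℝ F) m E ∧ JetVanishFarOn ω (ftaylorSeries ℝ F) m E := by
  obtain ⟨hsm, hhold⟩ := hF
  obtain ⟨M, hM⟩ := hhold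
  set M₀ : ℝ := max M 0 with hM₀def
  have hM₀0 : (0:ℝ) ≤ M₀ := le_max_right M 0
  have hωpos : ∀ t : ℝ, 0 < t → 0 < ω t := hω.1
  have hωmono : ∀ s t : ℝ, 0 < s → s ≤ t → ω s ≤ ω t := hω.2.1
  have hωdoub : ∀ t : ℝ, 0 < t → ω (2 * t) ≤ 2 * Cω * ω t := by
    intro t ht
    have ha := hωpos t ht
    have hb := hωpos (2 * t) (by linarith)
    have h := hω.2.2.2 t (2 * t) ht (by linarith)
    rw [mul_div_assoc'] at h
    rw [div_le_div_iff₀ ha hb] at h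
    have h3 : t * ω (2 * t) ≤ t * (2 * Cω * ω t) := by nlinarith [h]
    exact le_of_mul_le_mul_left h3 ht
  have hMp : ∀ a b : Rn n, a ≠ b →
      ‖iteratedFDeriv ℝ m F a - iteratedFDeriv ℝ m F b‖ ≤ M₀ * ω ‖a - b‖ := by
    intro a b hab
    have hab' : (0:ℝ) < ‖a - b‖ := by rw [norm_pos_iff]; exact sub_ne_zero.mpr hab
    have hr : ‖iteratedFDeriv ℝ m F a - iteratedFDeriv ℝ m F b‖ / ω ‖a - b‖ ≤ M :=
      hM ⟨a, Set.mem_univ a, b, Set.mem_univ b, hab, rfl⟩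
    rw [div_le_iff₀ (hωpos _ hab')] at hr
    exact le_trans hr (mul_le_mul_of_nonneg_right (le_max_left M 0) (le_of_lt (hωpos _ hab')))
  refine ⟨⟨?_, ?_⟩, ?_⟩
  · -- JetSymmOn
    intro x _ k hk σ w
    exact itfd_symm hsm k hk x σ w
  · -- BddAbove
    refine ⟨M₀, ?_⟩
    rintro r ⟨x, hx, y, hy, hxy, rfl⟩
    have hnorm : (0:ℝ) < ‖x - y‖ := by rw [norm_pos_iff]; exact sub_ne_zero.mpr hxy
    rw [div_le_iff₀ (hωpos _ hnorm)]
    refine jetR_le_of_bound hsm x y hxy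
      (holder_segment_bound hωpos hωmono hM₀0 x y hxy ?_)
    intro t ht hne
    exact hMp _ _ hne
  · -- JetVanishFarOn
    intro ε hε
    set ε₀ : ℝ := ε / (2 + 2 * Cω) with hε₀def
    have hden : (0:ℝ) < 2 + 2 * Cω := by linarith
    have hε₀pos : 0 < ε₀ := div_pos hε hden
    have hεeq : ε = ε₀ * (2 + 2 * Cω) := by
      rw [hε₀def]; field_simp
    have hε₀ε : ε₀ ≤ ε := by nlinarith [hε₀pos, hCω, hεeq]
    obtain ⟨K₁, hK₁⟩ := hFfar ε₀ hε₀pos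
    set K₀ : ℝ := max K₁ 1 with hK₀def
    have hK₀1 : (1:ℝ) ≤ K₀ := le_max_right _ _
    have hK₀pos : (0:ℝ) < K₀ := lt_of_lt_of_le one_pos hK₀1
    have hfar : ∀ a b : Rn n, a ≠ b → K₀ ≤ ‖a‖ → K₀ ≤ ‖b‖ →
        ‖iteratedFDeriv ℝ m F a - iteratedFDeriv ℝ m F b‖ ≤ ε₀ * ω ‖a - b‖ := by
      intro a b hab ha hb
      exact hK₁ a (Set.mem_univ a) b (Set.mem_univ b) hab
        (le_min (le_trans (le_max_left _ _) ha) (le_trans (le_max_left _ _) hb))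
    obtain ⟨T₀, hT₀⟩ := Filter.eventually_atTop.mp
      (hcoer.eventually_ge_atTop ((M₀ * ω (2 * K₀)) / ε₀))
    set S : ℝ := max (2 * K₀) T₀ with hSdef
    refine ⟨S + K₀, ?_⟩
    intro x hx y hy hxy hK
    have hxK : S + K₀ ≤ ‖x‖ := le_trans hK (min_le_left _ _)
    have hyK : S + K₀ ≤ ‖y‖ := le_trans hK (min_le_right _ _)
    have hSK : 2 * K₀ ≤ S := le_max_left _ _
    have hST : T₀ ≤ S := le_max_right _ _
    have hnorm : (0:ℝ) < ‖x - y‖ := by rw [norm_pos_iff]; exact sub_ne_zero.mpr hxy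
    have hωxy : (0:ℝ) < ω ‖x - y‖ := hωpos _ hnorm
    by_cases hsep : ‖x - y‖ ≤ S
    · -- Case A
      have hjet : jetR (ftaylorSeries ℝ F) m x y ≤ ε₀ * ω ‖x - y‖ := by
        refine jetR_le_of_bound hsm x y hxy
          (holder_segment_bound hωpos hωmono hε₀pos.le x y hxy ?_)
        intro t ht hne
        have hd := seg_dist_le x y ht
        have hξnorm : K₀ ≤ ‖y + t • (x - y)‖ := by
          have h2 : ‖y‖ - ‖y + t • (x - y)‖ ≤ ‖y - (y + t • (x - y))‖ := norm_sub_norm_le _ _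
          rw [norm_sub_rev] at h2
          linarith
        exact hfar _ y hne hξnorm (by linarith)
      exact le_trans hjet (mul_le_mul_of_nonneg_right hε₀ε hωxy.le)
    · -- Case B
      push_neg at hsep
      have hsep2 : 2 * K₀ < ‖x - y‖ := lt_of_le_of_lt hSK hsep
      set B : ℝ := ε₀ * ω ‖x - y‖ + (M₀ * ω (2 * K₀) + 2 * Cω * (ε₀ * ω ‖x - y‖)) with hBdef
      have hω2K : (0:ℝ) < ω (2 * K₀) := hωpos _ (by linarith)
      have hjet : jetR (ftaylorSeries ℝ F) m x y ≤ B := by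
        refine jetR_le_of_bound hsm x y hxy ?_
        intro t ht
        have hd := seg_dist_le x y ht
        have hBnn : (0:ℝ) ≤ B := by
          have h1 : (0:ℝ) ≤ ε₀ * ω ‖x - y‖ := mul_nonneg hε₀pos.le hωxy.le
          have h2 : (0:ℝ) ≤ M₀ * ω (2 * K₀) := mul_nonneg hM₀0 hω2K.le
          nlinarith [hCω]
        by_cases hξy0 : y + t • (x - y) = y
        · rw [hξy0, sub_self, norm_zero]
          exact hBnn
        · have hξypos : (0:ℝ) < ‖(y + t • (x - y)) - y‖ := by
            rw [norm_pos_iff]; exact sub_ne_zero.mpr hξy0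
          by_cases hξfar : K₀ ≤ ‖y + t • (x - y)‖
          · have h := hfar _ y hξy0 hξfar (by linarith)
            have hmono := hωmono _ _ hξypos hd
            have hb1 : ‖iteratedFDeriv ℝ m F (y + t • (x - y)) - iteratedFDeriv ℝ m F y‖ ≤
                ε₀ * ω ‖x - y‖ :=
              le_trans h (mul_le_mul_of_nonneg_left hmono hε₀pos.le)
            have h2 : (0:ℝ) ≤ M₀ * ω (2 * K₀) := mul_nonneg hM₀0 hω2K.le
            have h3 : (0:ℝ) ≤ 2 * Cω * (ε₀ * ω ‖x - y‖) := by positivity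
            rw [hBdef]; linarith
          · push_neg at hξfar
            set ξ : Rn n := y + t • (x - y) with hξdef
            set u : Rn n := (2 * K₀ / ‖x - y‖) • (x - y) with hudef
            set pfar : Rn n := ξ + u with hpdef
            have hunorm : ‖u‖ = 2 * K₀ := by
              rw [hudef, norm_smul, Real.norm_eq_abs,
                abs_of_nonneg (div_nonneg (by linarith) (norm_nonneg _))]
              field_simp
            have hpξ : pfar - ξ = u := by rw [hpdef]; exact add_sub_cancel_left ξ u
            have hpnorm : K₀ ≤ ‖pfar‖ := by
              have h1 : ‖pfar - ξ‖ ≤ ‖pfar‖ + ‖ξ‖ := norm_sub_le _ _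
              rw [hpξ, hunorm] at h1
              linarith
            have hpξne : pfar ≠ ξ := by
              intro h
              have : ‖u‖ = 0 := by rw [← hpξ, h, sub_self, norm_zero]
              rw [hunorm] at this
              linarith
            have hstep1 : ‖iteratedFDeriv ℝ m F ξ - iteratedFDeriv ℝ m F pfar‖ ≤
                M₀ * ω (2 * K₀) := by
              have h := hMp ξ pfar (Ne.symm hpξne)
              have hn : ‖ξ - pfar‖ = 2 * K₀ := by
                rw [norm_sub_rev, hpξ, hunorm]
              rwa [hn] at h
            have hstep2 : ‖iteratedFDeriv ℝ m F pfar - iteratedFDeriv ℝ m F y‖ ≤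
                2 * Cω * (ε₀ * ω ‖x - y‖) := by
              by_cases hpy : pfar = y
              · rw [hpy, sub_self, norm_zero]
                positivity
              · have h2 := hfar pfar y hpy hpnorm (by linarith)
                have hpymy : pfar - y = (ξ - y) + u := by rw [hpdef]; abel
                have hdist : ‖pfar - y‖ ≤ 2 * ‖x - y‖ := by
                  calc ‖pfar - y‖ ≤ ‖ξ - y‖ + ‖u‖ := by rw [hpymy]; exact norm_add_le _ _
                  _ ≤ ‖x - y‖ + 2 * K₀ := by rw [hunorm]; exact add_le_add_left hd _
                  _ ≤ 2 * ‖x - y‖ := by linarith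
                have hpypos : (0:ℝ) < ‖pfar - y‖ := by
                  rw [norm_pos_iff]; exact sub_ne_zero.mpr hpy
                have hω2 : ω ‖pfar - y‖ ≤ 2 * Cω * ω ‖x - y‖ :=
                  le_trans (hωmono _ _ hpypos hdist) (hωdoub _ hnorm)
                calc ‖iteratedFDeriv ℝ m F pfar - iteratedFDeriv ℝ m F y‖
                    ≤ ε₀ * ω ‖pfar - y‖ := h2
                  _ ≤ ε₀ * (2 * Cω * ω ‖x - y‖) :=
                      mul_le_mul_of_nonneg_left hω2 hε₀pos.le
                  _ = 2 * Cω * (ε₀ * ω ‖x - y‖) := by ring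
            have htri : ‖iteratedFDeriv ℝ m F ξ - iteratedFDeriv ℝ m F y‖ ≤
                ‖iteratedFDeriv ℝ m F ξ - iteratedFDeriv ℝ m F pfar‖ +
                ‖iteratedFDeriv ℝ m F pfar - iteratedFDeriv ℝ m F y‖ := by
              have hsplit : iteratedFDeriv ℝ m F ξ - iteratedFDeriv ℝ m F y =
                  (iteratedFDeriv ℝ m F ξ - iteratedFDeriv ℝ m F pfar) +
                  (iteratedFDeriv ℝ m F pfar - iteratedFDeriv ℝ m F y) := by abel
              rw [hsplit]
              exact norm_add_le _ _
            have h1 : (0:ℝ) ≤ ε₀ * ω ‖x - y‖ := mul_nonneg hε₀pos.le hωxy.le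
            rw [hBdef]
            linarith
      have hωbig : (M₀ * ω (2 * K₀)) / ε₀ ≤ ω ‖x - y‖ :=
        hT₀ ‖x - y‖ (le_of_lt (lt_of_le_of_lt hST hsep))
      have hM2 : M₀ * ω (2 * K₀) ≤ ε₀ * ω ‖x - y‖ := by
        rw [div_le_iff₀ hε₀pos] at hωbig
        nlinarith [hωbig]
      have hBle : B ≤ ε * ω ‖x - y‖ := by
        have heq2 : ε₀ * ω ‖x - y‖ + (ε₀ * ω ‖x - y‖ + 2 * Cω * (ε₀ * ω ‖x - y‖)) =
            (ε₀ * (2 + 2 * Cω)) * ω ‖x - y‖ := by ring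
        have heps : (ε₀ * (2 + 2 * Cω)) * ω ‖x - y‖ = ε * ω ‖x - y‖ := by rw [← hεeq]
        rw [hBdef]
        linarith [hM2, heq2, heps]
      exact le_trans hjet hBle
end
end

section
/- Let ω be a modulus of continuity satisfying both lim_{t→0⁺} t/ω(t)=0 and lim_{t→∞} ω(t)=∞, let E ⊆ ℝⁿ be a closed nonempty set, and let V be a Banach space. There exists a constant C depending only on n and C_ω such that: for every f ∈ VC_small^{0,ω}(E,V) and every ε>0, there exists a function G : ℝⁿ → V that is Lipschitz, infinitely differentiable, and belongs to C^{0,ω}(ℝⁿ,V), with ‖f − G|_E‖_{C^{0,ω}(E,V)} < ε and ‖G‖_{C^{0,ω}(ℝⁿ,V)} ≤ C·‖f‖_{C^{0,ω}(E,V)}. -/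
open Filter Set Topology

noncomputable section

namespace WhitneyApprox

open Metric MeasureTheory

/-- Elementary: `a^n - b^n ≤ n R^{n-1} (a-b)` for `0 ≤ b ≤ a ≤ R`. -/
lemma pow_sub_pow_le {a b R : ℝ} (hb : 0 ≤ b) (hba : b ≤ a) (haR : a ≤ R) (n : ℕ) :
    a ^ n - b ^ n ≤ (n : ℝ) * R ^ (n - 1) * (a - b) := by
  have hR : 0 ≤ R := le_trans (hb.trans hba) haR
  have h := geom_sum₂_mul a b n
  rw [← h]
  have hsum : (∑ i ∈ Finset.range n, a ^ i * b ^ (n - 1 - i)) ≤ (n : ℝ) * R ^ (n - 1) := by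
    calc (∑ i ∈ Finset.range n, a ^ i * b ^ (n - 1 - i))
        ≤ ∑ _i ∈ Finset.range n, R ^ (n - 1) := by
          apply Finset.sum_le_sum
          intro i hi
          have hi' : i < n := Finset.mem_range.1 hi
          have h1 : a ^ i ≤ R ^ i := pow_le_pow_left₀ (hb.trans hba) haR i
          have h2 : b ^ (n - 1 - i) ≤ R ^ (n - 1 - i) := pow_le_pow_left₀ hb (hba.trans haR) _
          calc a ^ i * b ^ (n - 1 - i) ≤ R ^ i * R ^ (n - 1 - i) :=
                mul_le_mul h1 h2 (pow_nonneg hb _) (pow_nonneg hR _)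
            _ = R ^ (n - 1) := by rw [← pow_add]; congr 1; omega
      _ = (n : ℝ) * R ^ (n - 1) := by
          rw [Finset.sum_const, Finset.card_range, nsmul_eq_mul]
  have hab : 0 ≤ a - b := sub_nonneg.2 hba
  exact mul_le_mul_of_nonneg_right hsum hab

/-- A measurable "2-approximate nearest point" selection onto a closed nonempty set. -/
lemma exists_sel {n : ℕ} (E : Set (Rn n)) (hE : IsClosed E) (hne : E.Nonempty) :
    ∃ p : Rn n → Rn n, Measurable p ∧ (∀ z, p z ∈ E) ∧
      (∀ z, dist z (p z) ≤ 2 * infDist z E) ∧ (∀ z ∈ E, p z = z) := by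
  classical
  haveI : Nonempty E := hne.to_subtype
  set q : ℕ → Rn n := fun k => (TopologicalSpace.denseSeq E k : Rn n) with hq
  have hqE : ∀ k, q k ∈ E := fun k => (TopologicalSpace.denseSeq E k).2
  set P : Rn n → ℕ → Prop := fun z k => dist z (q k) ≤ 2 * infDist z E with hPdef
  have hdense : ∀ z : Rn n, z ∉ E → ∃ k, P z k := by
    intro z hz
    have hd : 0 < infDist z E := (hE.notMem_iff_infDist_pos hne).1 hz
    obtain ⟨e, heE, he⟩ := (infDist_lt_iff hne).1
      (by linarith : infDist z E < (3 / 2) * infDist z E)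
    obtain ⟨k, hk⟩ := Metric.denseRange_iff.1 (TopologicalSpace.denseRange_denseSeq E)
      ⟨e, heE⟩ (infDist z E / 2) (by linarith)
    refine ⟨k, ?_⟩
    have hdist : dist e (q k) < infDist z E / 2 := hk
    calc dist z (q k) ≤ dist z e + dist e (q k) := dist_triangle _ _ _
      _ ≤ (3 / 2) * infDist z E + infDist z E / 2 := by
          have := he.le; have := hdist.le; linarith
      _ = 2 * infDist z E := by ring
  have hPmeas : ∀ k, MeasurableSet {z | P z k} := by
    intro k
    have hcl : IsClosed {z : Rn n | P z k} := by
      apply isClosed_le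
      · exact Continuous.dist continuous_id continuous_const
      · exact continuous_const.mul (continuous_infDist_pt E)
    exact hcl.measurableSet
  set N : Rn n → ℕ := fun z => if h : ∃ k, P z k then Nat.find h else 0 with hN
  have hNmeas : Measurable N := by
    apply measurable_to_countable'
    intro k
    have hset : N ⁻¹' {k} = ({z | P z k} ∩ ⋂ (j : ℕ), ⋂ (_ : j < k), {z | ¬ P z j}) ∪
        ((⋂ (j : ℕ), {z | ¬ P z j}) ∩ {z | k = 0}) := by
      ext z
      simp only [Set.mem_preimage, Set.mem_singleton_iff, hN, Set.mem_union, Set.mem_inter_iff,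
        Set.mem_iInter, Set.mem_setOf_eq]
      by_cases hex : ∃ k, P z k
      · rw [dif_pos hex, Nat.find_eq_iff hex]
        constructor
        · rintro ⟨h1, h2⟩; exact Or.inl ⟨h1, h2⟩
        · rintro (⟨h1, h2⟩ | ⟨hall, _⟩)
          · exact ⟨h1, h2⟩
          · exact absurd hex (by push_neg; exact hall)
      · rw [dif_neg hex]
        push_neg at hex
        constructor
        · rintro rfl; exact Or.inr ⟨hex, rfl⟩
        · rintro (⟨h1, _⟩ | ⟨_, h2⟩)
          · exact absurd h1 (hex k)
          · exact h2.symm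
    rw [hset]
    apply MeasurableSet.union
    · exact (hPmeas k).inter (MeasurableSet.iInter fun j => MeasurableSet.iInter fun _ =>
        (hPmeas j).compl)
    · apply MeasurableSet.inter
      · exact MeasurableSet.iInter fun j => (hPmeas j).compl
      · by_cases hk : k = 0 <;> simp [hk]
  refine ⟨fun z => if z ∈ E then z else q (N z), ?_, ?_, ?_, ?_⟩
  · exact Measurable.ite hE.measurableSet measurable_id
      ((measurable_from_top (f := q)).comp hNmeas)
  · intro z
    by_cases hz : z ∈ E
    · simpa [hz] using hz
    · simpa [hz] using hqE (N z)
  · intro z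
    by_cases hz : z ∈ E
    · simp only [hz, if_true, dist_self]
      have := infDist_nonneg (s := E) (x := z); linarith
    · simp only [hz, if_false]
      have hex := hdense z hz
      have hNz : N z = Nat.find hex := by rw [hN]; exact dif_pos hex
      rw [hNz]
      exact Nat.find_spec hex
  · intro z hz; simp [hz]


section Fex

variable {n : ℕ} {V : Type*} [NormedAddCommGroup V] [NormedSpace ℝ V] [CompleteSpace V]

open Classical in
/-- Variable-scale average extension of `f` from `E`. -/
noncomputable def Fex (E : Set (Rn n)) (f : Rn n → V) (p : Rn n → Rn n) : Rn n → V := fun x =>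
  if x ∈ E then f x
  else (volume (ball x (infDist x E / 2))).toReal⁻¹ •
    ∫ z in ball x (infDist x E / 2), f (p z)

variable {E : Set (Rn n)} {f : Rn n → V} {p : Rn n → Rn n}

lemma fex_integrableOn (hu : AEStronglyMeasurable (fun z => f (p z)) volume)
    {w : Rn n} {R C : ℝ} {c : V} (hC : ∀ z ∈ ball w R, ‖f (p z) - c‖ ≤ C) :
    IntegrableOn (fun z => f (p z)) (ball w R) volume := by
  apply Measure.integrableOn_of_bounded (M := C + ‖c‖) measure_ball_lt_top.ne hu
  filter_upwards [ae_restrict_mem measurableSet_ball] with z hz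
  calc ‖f (p z)‖ = ‖(f (p z) - c) + c‖ := by rw [sub_add_cancel]
    _ ≤ ‖f (p z) - c‖ + ‖c‖ := norm_add_le _ _
    _ ≤ C + ‖c‖ := by have := hC z hz; linarith

lemma fex_sub_eq (hE : IsClosed E) (hne : E.Nonempty)
    (hu : AEStronglyMeasurable (fun z => f (p z)) volume)
    {w : Rn n} (hw : w ∉ E) {c : V} {C : ℝ}
    (hC : ∀ z ∈ ball w (infDist w E / 2), ‖f (p z) - c‖ ≤ C) :
    Fex E f p w - c = (volume (ball w (infDist w E / 2))).toReal⁻¹ •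
      ∫ z in ball w (infDist w E / 2), (f (p z) - c) := by
  have hdw : 0 < infDist w E := (hE.notMem_iff_infDist_pos hne).1 hw
  set R := infDist w E / 2 with hR
  have hR0 : 0 < R := by positivity
  have hμ0 : volume (ball w R) ≠ 0 := (measure_ball_pos volume w hR0).ne'
  have hμt : volume (ball w R) ≠ ⊤ := measure_ball_lt_top.ne
  have hυ : 0 < (volume (ball w R)).toReal := ENNReal.toReal_pos hμ0 hμt
  have hint : IntegrableOn (fun z => f (p z)) (ball w R) volume := fex_integrableOn hu hC
  have hintc : IntegrableOn (fun _ : Rn n => c) (ball w R) volume :=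
    integrableOn_const measure_ball_lt_top.ne
  rw [integral_sub hint hintc, setIntegral_const, measureReal_def, smul_sub, smul_smul,
    inv_mul_cancel₀ hυ.ne', one_smul]
  rw [Fex, if_neg hw]

lemma fex_dist_le (hE : IsClosed E) (hne : E.Nonempty)
    (hu : AEStronglyMeasurable (fun z => f (p z)) volume)
    {w : Rn n} (hw : w ∉ E) {c : V} {C : ℝ}
    (hC : ∀ z ∈ ball w (infDist w E / 2), ‖f (p z) - c‖ ≤ C) :
    ‖Fex E f p w - c‖ ≤ C := by
  have hdw : 0 < infDist w E := (hE.notMem_iff_infDist_pos hne).1 hw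
  have hR0 : 0 < infDist w E / 2 := by positivity
  have hμ0 : volume (ball w (infDist w E / 2)) ≠ 0 := (measure_ball_pos volume w hR0).ne'
  have hμt : volume (ball w (infDist w E / 2)) ≠ ⊤ := measure_ball_lt_top.ne
  have hυ : 0 < (volume (ball w (infDist w E / 2))).toReal := ENNReal.toReal_pos hμ0 hμt
  rw [fex_sub_eq hE hne hu hw hC, norm_smul, Real.norm_eq_abs, abs_of_pos (by positivity)]
  have hnint : ‖∫ z in ball w (infDist w E / 2), (f (p z) - c)‖
      ≤ C * (volume (ball w (infDist w E / 2))).toReal :=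
    norm_setIntegral_le_of_norm_le_const measure_ball_lt_top hC
  calc (volume (ball w (infDist w E / 2))).toReal⁻¹ * ‖∫ z in ball w (infDist w E / 2), (f (p z) - c)‖
      ≤ (volume (ball w (infDist w E / 2))).toReal⁻¹ *
        (C * (volume (ball w (infDist w E / 2))).toReal) := by
        apply mul_le_mul_of_nonneg_left hnint (by positivity)
    _ = C := by field_simp

end Fex

section OmegaFacts

variable {ω : ℝ → ℝ} {Cω : ℝ}

lemma omega_scale (hω_pos : ∀ t, 0 < t → 0 < ω t)
    (hωq : ∀ s t : ℝ, 0 < s → s ≤ t → s / ω s ≤ Cω * (t / ω t))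
    {s T : ℝ} (hs : 0 < s) (hsT : s ≤ T) : ω T * s ≤ Cω * T * ω s := by
  have h := hωq s T hs hsT
  have hωs := hω_pos s hs
  have hωT := hω_pos T (lt_of_lt_of_le hs hsT)
  rw [div_le_iff₀ hωs] at h
  have hX : T / ω T * ω T = T := div_mul_cancel₀ T hωT.ne'
  calc ω T * s ≤ ω T * (Cω * (T / ω T) * ω s) := by
        exact mul_le_mul_of_nonneg_left h hωT.le
    _ = Cω * (T / ω T * ω T) * ω s := by ring
    _ = Cω * T * ω s := by rw [hX]

lemma omega_grow (hω_pos : ∀ t, 0 < t → 0 < ω t)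
    (hωq : ∀ s t : ℝ, 0 < s → s ≤ t → s / ω s ≤ Cω * (t / ω t))
    {c s : ℝ} (hc : 1 ≤ c) (hs : 0 < s) : ω (c * s) ≤ c * Cω * ω s := by
  have h := omega_scale hω_pos hωq hs (le_mul_of_one_le_left hs.le hc)
  have h2 : ω (c * s) * s ≤ (c * Cω * ω s) * s := by
    calc ω (c * s) * s ≤ Cω * (c * s) * ω s := h
      _ = (c * Cω * ω s) * s := by ring
  exact le_of_mul_le_mul_right h2 hs

end OmegaFacts


section Key

variable {n : ℕ} {V : Type*} [NormedAddCommGroup V] [NormedSpace ℝ V] [CompleteSpace V]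
variable {ω : ℝ → ℝ} {Cω : ℝ} {E : Set (Rn n)} {f : Rn n → V} {p : Rn n → Rn n} {m : ℝ}

set_option maxHeartbeats 1000000 in
theorem keyB
    (hω_pos : ∀ t, 0 < t → 0 < ω t)
    (hωq : ∀ s t : ℝ, 0 < s → s ≤ t → s / ω s ≤ Cω * (t / ω t))
    (hE : IsClosed E) (hne : E.Nonempty)
    (hpE : ∀ z, p z ∈ E) (hpd : ∀ z, dist z (p z) ≤ 2 * infDist z E)
    (hu : AEStronglyMeasurable (fun z => f (p z)) volume)
    (hm0 : 0 ≤ m)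
    (x y : Rn n) (hxy : x ≠ y)
    (hyx : infDist y E ≤ infDist x E) (hBc : 8 * dist x y < infDist x E)
    (hfe : ∀ D : ℝ, 0 < D → D ≤ 50 * (dist x y + infDist x E + infDist y E) →
      ∀ a ∈ E, ∀ b ∈ E, dist a b ≤ D → ‖f a - f b‖ ≤ m * ω D) :
    ‖Fex E f p x - Fex E f p y‖ ≤ 28 * n * (16/7 : ℝ)^n * Cω * m * ω (dist x y) := by
  have ht : 0 < dist x y := dist_pos.2 hxy
  set t := dist x y with htdef
  set R := infDist x E with hRdef
  set dy := infDist y E with hdydef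
  have hR : 0 < R := lt_trans (by positivity) hBc
  have hxE : x ∉ E := by
    intro h
    have h0 : R = 0 := by rw [hRdef]; exact infDist_zero_of_mem h
    linarith
  have hdyt : R ≤ dy + t := by
    have h := infDist_le_infDist_add_dist (x := x) (y := y) (s := E)
    rw [← hRdef, ← hdydef] at h; linarith
  have hdyu : dy ≤ R + t := by
    have h := infDist_le_infDist_add_dist (x := y) (y := x) (s := E)
    rw [← hRdef, ← hdydef, dist_comm] at h; linarith
  have hdy0 : 0 < dy := by linarith
  have hyE : y ∉ E := by
    intro h
    have h0 : dy = 0 := by rw [hdydef]; exact infDist_zero_of_mem h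
    linarith
  haveI : Nontrivial (Rn n) := ⟨x, y, hxy⟩
  have hn1 : 1 ≤ n := by
    have h := Module.finrank_pos (R := ℝ) (M := Rn n)
    rwa [finrank_euclideanSpace_fin] at h
  set rx := R / 2 with hrx
  set ry := dy / 2 with hry
  have hrx0 : 0 < rx := by rw [hrx]; positivity
  have hry0 : 0 < ry := by rw [hry]; positivity
  have hbl : 7 * R / 16 ≤ ry := by rw [hry]; linarith
  have hbu : ry ≤ 9 * R / 16 := by rw [hry]; linarith
  have hab1 : rx ≤ ry + t / 2 := by rw [hrx, hry]; linarith
  have hab2 : ry ≤ rx + t / 2 := by rw [hrx, hry]; linarith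
  have hrxR : rx ≤ R := by rw [hrx]; linarith
  have hryR : ry ≤ R := by linarith
  set v := (volume (ball (0 : Rn n) 1)).toReal with hv
  have hvol : ∀ (w : Rn n) (s : ℝ), 0 ≤ s → (volume (ball w s)).toReal = s ^ n * v := by
    intro w s hs
    rw [Measure.addHaar_ball volume w hs, ENNReal.toReal_mul,
      ENNReal.toReal_ofReal (by positivity), finrank_euclideanSpace_fin]
  have hv0 : 0 < v :=
    ENNReal.toReal_pos (measure_ball_pos volume 0 one_pos).ne' measure_ball_lt_top.ne
  set c := f (p x) with hc
  have hω8R : 0 < ω (8 * R) := hω_pos _ (by linarith)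
  set S := m * ω (8 * R) with hS
  have hS0 : 0 ≤ S := mul_nonneg hm0 hω8R.le
  have h8thr : (8:ℝ) * R ≤ 50 * (t + R + dy) := by linarith
  have hSb : ∀ z : Rn n, dist z x ≤ 11 * R / 16 → ‖f (p z) - c‖ ≤ S := by
    intro z hz
    apply hfe (8 * R) (by linarith) h8thr _ (hpE z) _ (hpE x)
    have h1 : dist z (p z) ≤ 2 * infDist z E := hpd z
    have h2 : infDist z E ≤ R + dist z x := by
      have h := infDist_le_infDist_add_dist (x := z) (y := x) (s := E)
      rw [← hRdef] at h; linarith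
    have h3 : dist x (p x) ≤ 2 * R := by have := hpd x; rw [← hRdef] at this; linarith
    calc dist (p z) (p x) ≤ dist (p z) z + dist z x + dist x (p x) := dist_triangle4 _ _ _ _
      _ ≤ 2 * infDist z E + 11 * R / 16 + 2 * R := by
          rw [dist_comm (p z) z]; linarith
      _ ≤ 8 * R := by linarith
  have hz1 : ∀ z ∈ ball x rx, dist z x ≤ 11 * R / 16 := by
    intro z hz
    have h := mem_ball.1 hz
    rw [hrx] at h; linarith
  have hz2 : ∀ z ∈ ball y ry, dist z x ≤ 11 * R / 16 := by
    intro z hz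
    have h1 : dist z y < ry := mem_ball.1 hz
    calc dist z x ≤ dist z y + dist y x := dist_triangle _ _ _
      _ ≤ ry + t := by rw [dist_comm y x, ← htdef]; linarith
      _ ≤ 11 * R / 16 := by linarith
  have hibx : IntegrableOn (fun z => f (p z)) (ball x rx) volume :=
    fex_integrableOn hu (c := c) (C := S) (fun z hz => hSb z (hz1 z hz))
  have hiby : IntegrableOn (fun z => f (p z)) (ball y ry) volume :=
    fex_integrableOn hu (c := c) (C := S) (fun z hz => hSb z (hz2 z hz))
  have hibx' : IntegrableOn (fun z => f (p z) - c) (ball x rx) volume :=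
    hibx.sub (integrableOn_const measure_ball_lt_top.ne)
  have hiby' : IntegrableOn (fun z => f (p z) - c) (ball y ry) volume :=
    hiby.sub (integrableOn_const measure_ball_lt_top.ne)
  set Ix := ∫ z in ball x rx, (f (p z) - c) with hIxdef
  set Iy := ∫ z in ball y ry, (f (p z) - c) with hIydef
  set vx := (volume (ball x rx)).toReal with hvxdef
  set vy := (volume (ball y ry)).toReal with hvydef
  have hvx : vx = rx ^ n * v := hvol x rx hrx0.le
  have hvy : vy = ry ^ n * v := hvol y ry hry0.le
  have hvx0 : 0 < vx :=
    ENNReal.toReal_pos (measure_ball_pos volume x hrx0).ne' measure_ball_lt_top.ne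
  have hvy0 : 0 < vy :=
    ENNReal.toReal_pos (measure_ball_pos volume y hry0).ne' measure_ball_lt_top.ne
  have hballx : ball x (infDist x E / 2) = ball x rx := by rw [hrx, hRdef]
  have hbally : ball y (infDist y E / 2) = ball y ry := by rw [hry, hdydef]
  have hFx : Fex E f p x - c = vx⁻¹ • Ix := by
    have h := fex_sub_eq hE hne hu hxE (c := c) (C := S)
      (fun z hz => hSb z (hz1 z (hballx ▸ hz)))
    rw [hballx] at h
    exact h
  have hFy : Fex E f p y - c = vy⁻¹ • Iy := by
    have h := fex_sub_eq hE hne hu hyE (c := c) (C := S)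
      (fun z hz => hSb z (hz2 z (hbally ▸ hz)))
    rw [hbally] at h
    exact h
  have h1 : ∫ z in ball x rx \ (ball x rx ∩ ball y ry), (f (p z) - c)
      = Ix - ∫ z in ball x rx ∩ ball y ry, (f (p z) - c) :=
    integral_diff (measurableSet_ball.inter measurableSet_ball) hibx' Set.inter_subset_left
  have h2 : ∫ z in ball y ry \ (ball y ry ∩ ball x rx), (f (p z) - c)
      = Iy - ∫ z in ball y ry ∩ ball x rx, (f (p z) - c) :=
    integral_diff (measurableSet_ball.inter measurableSet_ball) hiby' Set.inter_subset_left
  rw [Set.diff_self_inter] at h1 h2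
  rw [Set.inter_comm (ball y ry) (ball x rx)] at h2
  have hdecomp : Ix - Iy = (∫ z in ball x rx \ ball y ry, (f (p z) - c))
      - (∫ z in ball y ry \ ball x rx, (f (p z) - c)) := by
    rw [h1, h2]; abel
  have hIxn : ‖Ix‖ ≤ S * vx :=
    norm_setIntegral_le_of_norm_le_const measure_ball_lt_top
      (fun z hz => hSb z (hz1 z hz))
  have hIdn1 : ‖∫ z in ball x rx \ ball y ry, (f (p z) - c)‖
      ≤ S * (volume (ball x rx \ ball y ry)).toReal :=
    norm_setIntegral_le_of_norm_le_const
      (lt_of_le_of_lt (measure_mono Set.diff_subset) measure_ball_lt_top)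
      (fun z hz => hSb z (hz1 z hz.1))
  have hIdn2 : ‖∫ z in ball y ry \ ball x rx, (f (p z) - c)‖
      ≤ S * (volume (ball y ry \ ball x rx)).toReal :=
    norm_setIntegral_le_of_norm_le_const
      (lt_of_le_of_lt (measure_mono Set.diff_subset) measure_ball_lt_top)
      (fun z hz => hSb z (hz2 z hz.1))
  have hrymt0 : 0 ≤ ry - t := by linarith
  have hrxmt0 : 0 ≤ rx - t := by rw [hrx]; linarith
  have hsub1 : ball x rx \ ball y ry ⊆ ball x rx \ ball x (ry - t) := by
    intro z hz
    refine ⟨hz.1, fun hzin => hz.2 ?_⟩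
    have hzx : dist z x < ry - t := mem_ball.1 hzin
    have htr : dist z y ≤ dist z x + dist x y := dist_triangle _ _ _
    exact mem_ball.2 (by rw [← htdef] at htr; linarith)
  have hsub2 : ball y ry \ ball x rx ⊆ ball y ry \ ball y (rx - t) := by
    intro z hz
    refine ⟨hz.1, fun hzin => hz.2 ?_⟩
    have hzy : dist z y < rx - t := mem_ball.1 hzin
    have htr : dist z x ≤ dist z y + dist y x := dist_triangle _ _ _
    rw [dist_comm y x, ← htdef] at htr
    exact mem_ball.2 (by linarith)
  have hvold : ∀ (w : Rn n) (s1 s2 : ℝ), 0 ≤ s1 → s1 ≤ s2 →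
      (volume (ball w s2 \ ball w s1)).toReal = s2 ^ n * v - s1 ^ n * v := by
    intro w s1 s2 hs1 hs12
    rw [measure_diff (ball_subset_ball hs12) measurableSet_ball.nullMeasurableSet
      measure_ball_lt_top.ne,
      ENNReal.toReal_sub_of_le (measure_mono (ball_subset_ball hs12)) measure_ball_lt_top.ne,
      hvol w s1 hs1, hvol w s2 (hs1.trans hs12)]
  have hd1 : (volume (ball x rx \ ball y ry)).toReal ≤ ((n : ℝ) * R ^ (n - 1) * (3 / 2 * t)) * v := by
    calc (volume (ball x rx \ ball y ry)).toReal
        ≤ (volume (ball x rx \ ball x (ry - t))).toReal :=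
          ENNReal.toReal_mono
            ((lt_of_le_of_lt (measure_mono Set.diff_subset) measure_ball_lt_top)).ne
            (measure_mono hsub1)
      _ = rx ^ n * v - (ry - t) ^ n * v := hvold x (ry - t) rx hrymt0 (by linarith)
      _ = (rx ^ n - (ry - t) ^ n) * v := by ring
      _ ≤ ((n : ℝ) * R ^ (n - 1) * (rx - (ry - t))) * v :=
          mul_le_mul_of_nonneg_right (pow_sub_pow_le hrymt0 (by linarith) hrxR n) hv0.le
      _ ≤ ((n : ℝ) * R ^ (n - 1) * (3 / 2 * t)) * v := by
          apply mul_le_mul_of_nonneg_right _ hv0.le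
          apply mul_le_mul_of_nonneg_left (by linarith) (by positivity)
  have hd2 : (volume (ball y ry \ ball x rx)).toReal ≤ ((n : ℝ) * R ^ (n - 1) * (3 / 2 * t)) * v := by
    calc (volume (ball y ry \ ball x rx)).toReal
        ≤ (volume (ball y ry \ ball y (rx - t))).toReal :=
          ENNReal.toReal_mono
            ((lt_of_le_of_lt (measure_mono Set.diff_subset) measure_ball_lt_top)).ne
            (measure_mono hsub2)
      _ = ry ^ n * v - (rx - t) ^ n * v := hvold y (rx - t) ry hrxmt0 (by linarith)
      _ = (ry ^ n - (rx - t) ^ n) * v := by ring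
      _ ≤ ((n : ℝ) * R ^ (n - 1) * (ry - (rx - t))) * v :=
          mul_le_mul_of_nonneg_right (pow_sub_pow_le hrxmt0 (by linarith) hryR n) hv0.le
      _ ≤ ((n : ℝ) * R ^ (n - 1) * (3 / 2 * t)) * v := by
          apply mul_le_mul_of_nonneg_right _ hv0.le
          apply mul_le_mul_of_nonneg_left (by linarith) (by positivity)
  have hpowd : |ry ^ n - rx ^ n| ≤ (n : ℝ) * R ^ (n - 1) * (t / 2) := by
    rcases le_total rx ry with h | h
    · rw [abs_of_nonneg (sub_nonneg.2 (pow_le_pow_left₀ hrx0.le h n))]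
      calc ry ^ n - rx ^ n ≤ (n : ℝ) * R ^ (n - 1) * (ry - rx) := pow_sub_pow_le hrx0.le h hryR n
        _ ≤ _ := mul_le_mul_of_nonneg_left (by linarith) (by positivity)
    · rw [abs_of_nonpos (sub_nonpos.2 (pow_le_pow_left₀ hry0.le h n)), neg_sub]
      calc rx ^ n - ry ^ n ≤ (n : ℝ) * R ^ (n - 1) * (rx - ry) := pow_sub_pow_le hry0.le h hrxR n
        _ ≤ _ := mul_le_mul_of_nonneg_left (by linarith) (by positivity)
  have hsplit : Fex E f p x - Fex E f p y = (vx⁻¹ - vy⁻¹) • Ix + vy⁻¹ • (Ix - Iy) := by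
    have h3 : Fex E f p x - Fex E f p y = (Fex E f p x - c) - (Fex E f p y - c) := by abel
    rw [h3, hFx, hFy, sub_smul, smul_sub]; abel
  rw [hsplit]
  have hvyP : (7 * R / 16) ^ n * v ≤ vy := by
    rw [hvy]
    exact mul_le_mul_of_nonneg_right (pow_le_pow_left₀ (by positivity) hbl n) hv0.le
  have hP0 : 0 < (7 * R / 16) ^ n * v := by positivity
  have hterm1 : ‖(vx⁻¹ - vy⁻¹) • Ix‖ ≤ S * ((|ry ^ n - rx ^ n| * v) / vy) := by
    rw [norm_smul, Real.norm_eq_abs]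
    have hid : |vx⁻¹ - vy⁻¹| = (|ry ^ n - rx ^ n| * v) / (vy * vx) := by
      rw [inv_sub_inv hvx0.ne' hvy0.ne', show vx * vy = vy * vx by ring]
      rw [abs_div, abs_of_pos (mul_pos hvy0 hvx0)]
      congr 1
      rw [hvx, hvy, show ry ^ n * v - rx ^ n * v = (ry ^ n - rx ^ n) * v by ring,
        abs_mul, abs_of_pos hv0]
    calc |vx⁻¹ - vy⁻¹| * ‖Ix‖ ≤ |vx⁻¹ - vy⁻¹| * (S * vx) :=
          mul_le_mul_of_nonneg_left hIxn (abs_nonneg _)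
      _ = (|ry ^ n - rx ^ n| * v) / (vy * vx) * (S * vx) := by rw [hid]
      _ = S * ((|ry ^ n - rx ^ n| * v) / vy) := by
          field_simp
  have hterm2 : ‖vy⁻¹ • (Ix - Iy)‖ ≤ S * (((volume (ball x rx \ ball y ry)).toReal
      + (volume (ball y ry \ ball x rx)).toReal) / vy) := by
    rw [norm_smul, Real.norm_eq_abs, abs_inv, abs_of_pos hvy0]
    have hn2 : ‖Ix - Iy‖ ≤ S * ((volume (ball x rx \ ball y ry)).toReal
        + (volume (ball y ry \ ball x rx)).toReal) := by
      rw [hdecomp]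
      calc ‖(∫ z in ball x rx \ ball y ry, (f (p z) - c))
            - (∫ z in ball y ry \ ball x rx, (f (p z) - c))‖
          ≤ ‖∫ z in ball x rx \ ball y ry, (f (p z) - c)‖
            + ‖∫ z in ball y ry \ ball x rx, (f (p z) - c)‖ := norm_sub_le _ _
        _ ≤ S * (volume (ball x rx \ ball y ry)).toReal
            + S * (volume (ball y ry \ ball x rx)).toReal := add_le_add hIdn1 hIdn2
        _ = S * ((volume (ball x rx \ ball y ry)).toReal
            + (volume (ball y ry \ ball x rx)).toReal) := by ring
    calc vy⁻¹ * ‖Ix - Iy‖ ≤ vy⁻¹ * (S * ((volume (ball x rx \ ball y ry)).toReal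
          + (volume (ball y ry \ ball x rx)).toReal)) :=
          mul_le_mul_of_nonneg_left hn2 (by positivity)
      _ = S * (((volume (ball x rx \ ball y ry)).toReal
          + (volume (ball y ry \ ball x rx)).toReal) / vy) := by
          rw [div_eq_mul_inv]; ring
  have hq1 : (|ry ^ n - rx ^ n| * v) / vy
      ≤ ((n : ℝ) * R ^ (n - 1) * (t / 2) * v) / ((7 * R / 16) ^ n * v) :=
    div_le_div₀ (by positivity) (mul_le_mul_of_nonneg_right hpowd hv0.le) hP0 hvyP
  have hq2 : ((volume (ball x rx \ ball y ry)).toReal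
      + (volume (ball y ry \ ball x rx)).toReal) / vy
      ≤ ((n : ℝ) * R ^ (n - 1) * (3 * t) * v) / ((7 * R / 16) ^ n * v) := by
    apply div_le_div₀ (by positivity) _ hP0 hvyP
    calc (volume (ball x rx \ ball y ry)).toReal + (volume (ball y ry \ ball x rx)).toReal
        ≤ ((n : ℝ) * R ^ (n - 1) * (3 / 2 * t)) * v + ((n : ℝ) * R ^ (n - 1) * (3 / 2 * t)) * v :=
          add_le_add hd1 hd2
      _ = (n : ℝ) * R ^ (n - 1) * (3 * t) * v := by ring
  calc ‖(vx⁻¹ - vy⁻¹) • Ix + vy⁻¹ • (Ix - Iy)‖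
      ≤ ‖(vx⁻¹ - vy⁻¹) • Ix‖ + ‖vy⁻¹ • (Ix - Iy)‖ := norm_add_le _ _
    _ ≤ S * ((|ry ^ n - rx ^ n| * v) / vy) + S * (((volume (ball x rx \ ball y ry)).toReal
        + (volume (ball y ry \ ball x rx)).toReal) / vy) := add_le_add hterm1 hterm2
    _ ≤ S * (((n : ℝ) * R ^ (n - 1) * (t / 2) * v) / ((7 * R / 16) ^ n * v))
        + S * (((n : ℝ) * R ^ (n - 1) * (3 * t) * v) / ((7 * R / 16) ^ n * v)) :=
        add_le_add (mul_le_mul_of_nonneg_left hq1 hS0) (mul_le_mul_of_nonneg_left hq2 hS0)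
    _ = S * (7 / 2 * ((n : ℝ) * R ^ (n - 1) * t) * v) / ((7 * R / 16) ^ n * v) := by
        field_simp
        ring
    _ ≤ 28 * n * (16 / 7 : ℝ) ^ n * Cω * m * ω t := by
        rw [div_le_iff₀ hP0]
        have hsc : ω (8 * R) * t ≤ Cω * (8 * R) * ω t :=
          omega_scale hω_pos hωq ht (by linarith)
        have hRn : R ^ n = R ^ (n - 1) * R := by
          rw [← pow_succ]; congr 1; omega
        have h716 : (7 * R / 16 : ℝ) ^ n = (7 / 16 : ℝ) ^ n * R ^ n := by
          rw [← mul_pow]; congr 1; ring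
        rw [h716, hRn]
        have hresolve : 28 * (n : ℝ) * (16 / 7 : ℝ) ^ n * Cω * m * ω t
            * ((7 / 16 : ℝ) ^ n * (R ^ (n - 1) * R) * v)
            = 28 * (n : ℝ) * Cω * m * ω t * (R ^ (n - 1) * R * v) := by
          calc 28 * (n : ℝ) * (16 / 7 : ℝ) ^ n * Cω * m * ω t
              * ((7 / 16 : ℝ) ^ n * (R ^ (n - 1) * R) * v)
              = 28 * (n : ℝ) * Cω * m * ω t * (R ^ (n - 1) * R * v)
                * ((16 / 7 : ℝ) ^ n * (7 / 16 : ℝ) ^ n) := by ring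
            _ = _ := by
                rw [show (16 / 7 : ℝ) ^ n * (7 / 16 : ℝ) ^ n = 1 by rw [← mul_pow]; norm_num]
                ring
        rw [hresolve, hS]
        have hmn0 : 0 ≤ m * (n : ℝ) * R ^ (n - 1) * v :=
          mul_nonneg (mul_nonneg (mul_nonneg hm0 (Nat.cast_nonneg n)) (by positivity)) hv0.le
        calc m * ω (8 * R) * (7 / 2 * ((n : ℝ) * R ^ (n - 1) * t) * v)
            = 7 / 2 * (ω (8 * R) * t) * (m * (n : ℝ) * R ^ (n - 1) * v) := by ring
          _ ≤ 7 / 2 * (Cω * (8 * R) * ω t) * (m * (n : ℝ) * R ^ (n - 1) * v) := by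
              apply mul_le_mul_of_nonneg_right _ hmn0
              exact mul_le_mul_of_nonneg_left hsc (by norm_num)
          _ = 28 * (n : ℝ) * Cω * m * ω t * (R ^ (n - 1) * R * v) := by ring

set_option maxHeartbeats 1000000 in
theorem key
    (hω_pos : ∀ t, 0 < t → 0 < ω t)
    (hω_mono : ∀ s t : ℝ, 0 < s → s ≤ t → ω s ≤ ω t)
    (hωq : ∀ s t : ℝ, 0 < s → s ≤ t → s / ω s ≤ Cω * (t / ω t))
    (hE : IsClosed E) (hne : E.Nonempty)
    (hpE : ∀ z, p z ∈ E) (hpd : ∀ z, dist z (p z) ≤ 2 * infDist z E)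
    (hpid : ∀ z ∈ E, p z = z)
    (hu : AEStronglyMeasurable (fun z => f (p z)) volume)
    (hm0 : 0 ≤ m)
    (x y : Rn n) (hxy : x ≠ y)
    (hm : ∀ a ∈ E, ∀ b ∈ E, a ≠ b →
      dist a b ≤ 50 * (dist x y + infDist x E + infDist y E) →
      ‖f a - f b‖ ≤ m * ω (dist a b)) :
    ‖Fex E f p x - Fex E f p y‖
      ≤ (144 + 28 * n * (16/7 : ℝ)^n) * Cω * m * ω (dist x y) := by
  have ht : 0 < dist x y := dist_pos.2 hxy
  have hfe : ∀ D : ℝ, 0 < D → D ≤ 50 * (dist x y + infDist x E + infDist y E) →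
      ∀ a ∈ E, ∀ b ∈ E, dist a b ≤ D → ‖f a - f b‖ ≤ m * ω D := by
    intro D hD hDthr a ha b hb hab
    by_cases hab' : a = b
    · subst hab'
      simp only [sub_self, norm_zero]
      exact mul_nonneg hm0 (hω_pos D hD).le
    · calc ‖f a - f b‖ ≤ m * ω (dist a b) := hm a ha b hb hab' (hab.trans hDthr)
        _ ≤ m * ω D := mul_le_mul_of_nonneg_left (hω_mono _ _ (dist_pos.2 hab') hab) hm0
  have hA1 : ∀ (w : Rn n) (D : ℝ), 0 < D → 6 * infDist w E ≤ D →
      D ≤ 50 * (dist x y + infDist x E + infDist y E) →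
      ‖Fex E f p w - f (p w)‖ ≤ m * ω D := by
    intro w D hD h6 hDthr
    by_cases hw : w ∈ E
    · rw [show Fex E f p w = f w by rw [Fex, if_pos hw], hpid w hw, sub_self, norm_zero]
      exact mul_nonneg hm0 (hω_pos D hD).le
    · apply fex_dist_le hE hne hu hw
      intro z hz
      have hzw : dist z w < infDist w E / 2 := mem_ball.1 hz
      apply hfe D hD hDthr _ (hpE z) _ (hpE w)
      have h2 : infDist z E ≤ infDist w E + dist z w := infDist_le_infDist_add_dist
      have h3 := hpd z
      have h4 := hpd w
      calc dist (p z) (p w) ≤ dist (p z) z + dist z w + dist w (p w) := dist_triangle4 _ _ _ _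
        _ ≤ 2 * infDist z E + infDist w E / 2 + 2 * infDist w E := by
            rw [dist_comm (p z) z]
            have := hzw.le
            linarith
        _ ≤ D := by linarith
  by_cases hA : max (infDist x E) (infDist y E) ≤ 8 * dist x y
  · -- Case A
    have hdx0 : 0 ≤ infDist x E := infDist_nonneg
    have hdy0 : 0 ≤ infDist y E := infDist_nonneg
    have hdx8 : infDist x E ≤ 8 * dist x y := le_trans (le_max_left _ _) hA
    have hdy8 : infDist y E ≤ 8 * dist x y := le_trans (le_max_right _ _) hA
    have hD : (0:ℝ) < 48 * dist x y := by linarith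
    have hthr : 48 * dist x y ≤ 50 * (dist x y + infDist x E + infDist y E) := by linarith
    have e1 := hA1 x (48 * dist x y) hD (by linarith) hthr
    have e2 := hA1 y (48 * dist x y) hD (by linarith) hthr
    have e3 : ‖f (p x) - f (p y)‖ ≤ m * ω (48 * dist x y) := by
      apply hfe _ hD hthr _ (hpE x) _ (hpE y)
      have h3 := hpd x
      have h4 := hpd y
      calc dist (p x) (p y) ≤ dist (p x) x + dist x y + dist y (p y) := dist_triangle4 _ _ _ _
        _ ≤ 2 * infDist x E + dist x y + 2 * infDist y E := by
            rw [dist_comm (p x) x]; linarith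
        _ ≤ 48 * dist x y := by linarith
    have htri : ‖Fex E f p x - Fex E f p y‖ ≤ ‖Fex E f p x - f (p x)‖
        + ‖f (p x) - f (p y)‖ + ‖f (p y) - Fex E f p y‖ := by
      have h := dist_triangle4 (Fex E f p x) (f (p x)) (f (p y)) (Fex E f p y)
      simpa [dist_eq_norm] using h
    have e2' : ‖f (p y) - Fex E f p y‖ ≤ m * ω (48 * dist x y) := by
      rw [norm_sub_rev]; exact e2
    have hg : ω (48 * dist x y) ≤ 48 * Cω * ω (dist x y) :=
      omega_grow hω_pos hωq (by norm_num) ht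
    have b1 : m * ω (48 * dist x y) ≤ m * (48 * Cω * ω (dist x y)) :=
      mul_le_mul_of_nonneg_left hg hm0
    have hrest : 0 ≤ 28 * n * (16/7 : ℝ)^n * Cω * (m * ω (dist x y)) := by
      have hCω0 : 0 ≤ Cω := by
        have h := hωq 1 1 one_pos le_rfl
        have h1 := hω_pos 1 one_pos
        nlinarith [div_pos one_pos h1]
      exact mul_nonneg (mul_nonneg (by positivity) hCω0)
        (mul_nonneg hm0 (hω_pos _ ht).le)
    have hexp : (144 + 28 * n * (16/7 : ℝ)^n) * Cω * m * ω (dist x y)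
        = 3 * (m * (48 * Cω * ω (dist x y)))
          + 28 * n * (16/7 : ℝ)^n * Cω * (m * ω (dist x y)) := by ring
    rw [hexp]
    linarith
  · push_neg at hA
    rcases le_total (infDist y E) (infDist x E) with hc | hc
    · have hBc : 8 * dist x y < infDist x E := by rwa [max_eq_left hc] at hA
      have h := keyB hω_pos hωq hE hne hpE hpd hu hm0 x y hxy hc hBc hfe
      have hCω0 : 0 ≤ Cω := by
        have hq := hωq 1 1 one_pos le_rfl
        have h1 := hω_pos 1 one_pos
        nlinarith [div_pos one_pos h1]
      have hrest : 0 ≤ 144 * Cω * m * ω (dist x y) := by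
        have := mul_nonneg hm0 (hω_pos _ ht).le
        nlinarith
      have hexp : (144 + 28 * n * (16/7 : ℝ)^n) * Cω * m * ω (dist x y)
          = 28 * n * (16/7 : ℝ)^n * Cω * m * ω (dist x y)
            + 144 * Cω * m * ω (dist x y) := by ring
      rw [hexp]
      linarith
    · have hBc : 8 * dist x y < infDist y E := by rwa [max_eq_right hc] at hA
      have hBc' : 8 * dist y x < infDist y E := by rwa [dist_comm y x]
      have hfe' : ∀ D : ℝ, 0 < D → D ≤ 50 * (dist y x + infDist y E + infDist x E) →
          ∀ a ∈ E, ∀ b ∈ E, dist a b ≤ D → ‖f a - f b‖ ≤ m * ω D := by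
        intro D hD hthr'
        apply hfe D hD
        rw [dist_comm y x] at hthr'
        linarith
      have h := keyB hω_pos hωq hE hne hpE hpd hu hm0 y x (Ne.symm hxy) hc hBc' hfe'
      rw [dist_comm y x] at h
      rw [norm_sub_rev] at h
      have hCω0 : 0 ≤ Cω := by
        have hq := hωq 1 1 one_pos le_rfl
        have h1 := hω_pos 1 one_pos
        nlinarith [div_pos one_pos h1]
      have hrest : 0 ≤ 144 * Cω * m * ω (dist x y) := by
        have := mul_nonneg hm0 (hω_pos _ ht).le
        nlinarith
      have hexp : (144 + 28 * n * (16/7 : ℝ)^n) * Cω * m * ω (dist x y)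
          = 28 * n * (16/7 : ℝ)^n * Cω * m * ω (dist x y)
            + 144 * Cω * m * ω (dist x y) := by ring
      rw [hexp]
      linarith


end Key


section Main

open scoped Convolution

lemma ratio_bound {n : ℕ} {W : Type*} [NormedAddCommGroup W] {ω : ℝ → ℝ}
    (hω_pos : ∀ t, 0 < t → 0 < ω t) (g : Rn n → W) (A : Set (Rn n)) {c : ℝ} (hc : 0 ≤ c)
    (h : ∀ x ∈ A, ∀ y ∈ A, x ≠ y → ‖g x - g y‖ ≤ c * ω ‖x - y‖) :
    MemHolderOn ω g A ∧ holderNormOn ω g A ≤ c := by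
  have hub : c ∈ upperBounds (ratioSet ω g A) := by
    rintro ρ ⟨a, ha, b, hb, hab, rfl⟩
    have hpos : 0 < ω ‖a - b‖ := hω_pos _ (norm_pos_iff.2 (sub_ne_zero.2 hab))
    rw [div_le_iff₀ hpos]
    exact h a ha b hb hab
  constructor
  · exact ⟨c, hub⟩
  · rcases (ratioSet ω g A).eq_empty_or_nonempty with he | hne
    · rw [holderNormOn, he, Real.sSup_empty]; exact hc
    · exact csSup_le hne fun ρ hρ => hub hρ

end Main

end WhitneyApprox

open Metric MeasureTheory WhitneyApprox
open scoped Convolution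


set_option maxHeartbeats 2000000 in
/-- approximation of `f ∈ VC_small^{0,ω}(E,V)` by Lipschitz smooth functions
`G ∈ C^{0,ω}(ℝⁿ,V)`, with `‖f − G|_E‖ < ε` and `‖G‖ ≤ C‖f‖` for `C = C(n, Cω)`. -/
theorem approx_by_lipschitz_smooth (n : ℕ) (Cω : ℝ) (hCω : 0 < Cω) :
    ∃ C : ℝ, ∀ ω : ℝ → ℝ, IsModulus ω Cω →
      Filter.Tendsto (fun t => t / ω t) (nhdsWithin 0 (Set.Ioi 0)) (nhds 0) →
      Filter.Tendsto ω Filter.atTop Filter.atTop →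
      ∀ (V : Type) [NormedAddCommGroup V] [NormedSpace ℝ V] [CompleteSpace V],
      ∀ E : Set (Rn n), E.Nonempty → IsClosed E →
      ∀ f : Rn n → V, MemHolderOn ω f E → VanishSmallOn ω f E →
      ∀ ε : ℝ, 0 < ε →
        ∃ G : Rn n → V,
          (∃ L : NNReal, LipschitzWith L G) ∧
          (∀ j : ℕ, ContDiff ℝ j G) ∧
          MemHolderOn ω G Set.univ ∧
          MemHolderOn ω (fun x => f x - G x) E ∧
          holderNormOn ω (fun x => f x - G x) E < ε ∧
          holderNormOn ω G Set.univ ≤ C * holderNormOn ω f E := by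
  refine ⟨(144 + 28 * n * (16/7 : ℝ)^n) * Cω, ?_⟩
  intro ω hmod hsmall hatop V _ _ _ E hne hE f hf hvs ε hε
  obtain ⟨hω_pos, hω_mono, hω0, hωq⟩ := hmod
  clear hsmall hatop
  set K := (144 + 28 * n * (16/7 : ℝ)^n) * Cω with hK
  have hK0 : 0 < K := by rw [hK]; positivity
  set M := holderNormOn ω f E with hM
  have hM0 : 0 ≤ M := by
    rcases (ratioSet ω f E).eq_empty_or_nonempty with he | hrne
    · rw [hM, holderNormOn, he, Real.sSup_empty]
    · obtain ⟨ρ, hρ⟩ := hrne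
      obtain ⟨a, ha, b, hb, hab, rfl⟩ := hρ
      have h1 : 0 ≤ ‖f a - f b‖ / ω ‖a - b‖ :=
        div_nonneg (norm_nonneg _) (hω_pos _ (norm_pos_iff.2 (sub_ne_zero.2 hab))).le
      exact h1.trans (le_csSup hf ⟨a, ha, b, hb, hab, rfl⟩)
  have hMp : ∀ a ∈ E, ∀ b ∈ E, a ≠ b → ‖f a - f b‖ ≤ M * ω (dist a b) := by
    intro a ha b hb hab
    have hωab : 0 < ω ‖a - b‖ := hω_pos _ (norm_pos_iff.2 (sub_ne_zero.2 hab))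
    have hle : ‖f a - f b‖ / ω ‖a - b‖ ≤ M := le_csSup hf ⟨a, ha, b, hb, hab, rfl⟩
    rw [div_le_iff₀ hωab] at hle
    rw [dist_eq_norm]
    linarith
  obtain ⟨p, hpm, hpE, hpd, hpid⟩ := exists_sel E hE hne
  borelize V
  -- continuity of f on E
  have hfc : Continuous (fun e : E => f e) := by
    rw [Metric.continuous_iff]
    intro a ε' hε'
    have hM1 : 0 < M + 1 := by linarith
    have hmem : ω ⁻¹' (Iio (ε' / (M + 1))) ∈ nhdsWithin (0:ℝ) (Ioi 0) :=
      hω0 (Iio_mem_nhds (by positivity))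
    obtain ⟨δ', hδ'0, hsub⟩ := Metric.mem_nhdsWithin_iff.1 hmem
    refine ⟨δ', hδ'0, fun b hb => ?_⟩
    rcases eq_or_ne b a with rfl | hba
    · simpa using hε'
    · have hba' : (b : Rn n) ≠ (a : Rn n) := fun hc => hba (Subtype.ext hc)
      have hd : dist (b : Rn n) (a : Rn n) < δ' := hb
      have hωs : ω (dist (b : Rn n) (a : Rn n)) < ε' / (M + 1) := by
        apply hsub
        constructor
        · simp only [mem_ball, Real.dist_eq, sub_zero]
          rw [abs_of_nonneg dist_nonneg]
          exact hd
        · exact dist_pos.2 hba'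
      have h := hMp b b.2 a a.2 hba'
      have : dist (f b) (f a) ≤ M * ω (dist (b : Rn n) (a : Rn n)) := by
        rw [dist_eq_norm]; exact h
      calc dist (f b) (f a) ≤ M * ω (dist (b : Rn n) (a : Rn n)) := this
        _ ≤ M * (ε' / (M + 1)) := mul_le_mul_of_nonneg_left hωs.le hM0
        _ = (M / (M + 1)) * ε' := by ring
        _ < 1 * ε' := by
            apply mul_lt_mul_of_pos_right _ hε'
            rw [div_lt_one hM1]
            linarith
        _ = ε' := one_mul _
  have hu : AEStronglyMeasurable (fun z => f (p z)) volume := by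
    have hPm : Measurable (fun z => (⟨p z, hpE z⟩ : E)) := hpm.subtype_mk
    exact (hfc.stronglyMeasurable.comp_measurable hPm).aestronglyMeasurable
  set F := Fex E f p with hFdef
  have hFE : ∀ a ∈ E, F a = f a := by
    intro a ha
    rw [hFdef, Fex, if_pos ha]
  -- global Hölder bound for F
  have hFglob : ∀ a b : Rn n, a ≠ b → ‖F a - F b‖ ≤ K * M * ω (dist a b) := by
    intro a b hab
    have h := key hω_pos hω_mono hωq hE hne hpE hpd hpid hu hM0 a b hab
      (fun a' ha' b' hb' hab' _ => hMp a' ha' b' hb' hab')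
    calc ‖F a - F b‖ ≤ (144 + 28 * n * (16/7 : ℝ)^n) * Cω * M * ω (dist a b) := h
      _ = K * M * ω (dist a b) := by rw [hK]
  -- continuity of F
  have hKM0 : 0 ≤ K * M := mul_nonneg hK0.le hM0
  have hFc : Continuous F := by
    rw [Metric.continuous_iff]
    intro a ε' hε'
    have hKM1 : 0 < K * M + 1 := by linarith
    have hmem : ω ⁻¹' (Iio (ε' / (K * M + 1))) ∈ nhdsWithin (0:ℝ) (Ioi 0) :=
      hω0 (Iio_mem_nhds (by positivity))
    obtain ⟨δ', hδ'0, hsub⟩ := Metric.mem_nhdsWithin_iff.1 hmem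
    refine ⟨δ', hδ'0, fun b hb => ?_⟩
    rcases eq_or_ne b a with rfl | hba
    · simpa using hε'
    · have hωs : ω (dist b a) < ε' / (K * M + 1) := by
        apply hsub
        constructor
        · simp only [mem_ball, Real.dist_eq, sub_zero]
          rw [abs_of_nonneg dist_nonneg]
          exact hb
        · exact dist_pos.2 hba
      calc dist (F b) (F a) = ‖F b - F a‖ := dist_eq_norm _ _
        _ ≤ K * M * ω (dist b a) := hFglob b a hba
        _ ≤ K * M * (ε' / (K * M + 1)) := mul_le_mul_of_nonneg_left hωs.le hKM0
        _ = (K * M / (K * M + 1)) * ε' := by ring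
        _ < 1 * ε' := by
            apply mul_lt_mul_of_pos_right _ hε'
            rw [div_lt_one hKM1]
            linarith
        _ = ε' := one_mul _
  have hFli : MeasureTheory.LocallyIntegrable F volume := hFc.locallyIntegrable
  -- parameters
  set ε₁ := ε / (2 * (1 + 2 * K)) with hε₁def
  have hε₁0 : 0 < ε₁ := by rw [hε₁def]; positivity
  have hkey₁ : (1 + 2 * K) * ε₁ = ε / 2 := by
    rw [hε₁def]
    field_simp
  obtain ⟨δ, hδ0, hδ⟩ := hvs ε₁ hε₁0
  set r := δ / 150 with hrdef
  have hr0 : 0 < r := by rw [hrdef]; positivity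
  -- local Hölder bound for F near E
  have hFloc : ∀ a b : Rn n, a ≠ b → dist a b + infDist a E + infDist b E ≤ 3 * r →
      ‖F a - F b‖ ≤ K * ε₁ * ω (dist a b) := by
    intro a b hab hsum
    have h := key hω_pos hω_mono hωq hE hne hpE hpd hpid hu hε₁0.le a b hab ?_
    · calc ‖F a - F b‖ ≤ (144 + 28 * n * (16/7 : ℝ)^n) * Cω * ε₁ * ω (dist a b) := h
        _ = K * ε₁ * ω (dist a b) := by rw [hK]
    · intro a' ha' b' hb' hab' hdist
      have hle : ‖a' - b'‖ ≤ δ := by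
        rw [← dist_eq_norm]
        calc dist a' b' ≤ 50 * (dist a b + infDist a E + infDist b E) := hdist
          _ ≤ 50 * (3 * r) := by
              apply mul_le_mul_of_nonneg_left hsum (by norm_num)
          _ = δ := by rw [hrdef]; ring
      have h := hδ a' ha' b' hb' hab' hle
      rwa [dist_eq_norm]
  -- bump function
  set φb : ContDiffBump (0 : Rn n) := ⟨r/2, r, by positivity, by linarith⟩ with hφb
  set φ := φb.normed volume with hφdef
  have hφc : Continuous φ := φb.continuous_normed
  have hφs : HasCompactSupport φ := φb.hasCompactSupport_normed
  have hφnn : ∀ z, 0 ≤ φ z := fun z => φb.nonneg_normed z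
  have hφint : ∫ z, φ z = 1 := φb.integral_normed
  have hφsupp : Function.support φ = ball (0 : Rn n) r := φb.support_normed_eq
  set G := (φ ⋆[ContinuousLinearMap.lsmul ℝ ℝ, volume] F) with hGdefn
  have hint1 : ∀ x : Rn n, MeasureTheory.Integrable (fun z => φ z • F (x - z)) volume := by
    intro x
    apply Continuous.integrable_of_hasCompactSupport
    · exact hφc.smul (hFc.comp (continuous_const.sub continuous_id))
    · apply HasCompactSupport.intro (isCompact_closedBall (0 : Rn n) r)
      intro w hw
      have h0 : φ w = 0 := by
        rw [← Function.notMem_support, hφsupp]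
        intro hmem
        exact hw (ball_subset_closedBall hmem)
      rw [h0, zero_smul]
  have hGdef : ∀ x, G x = ∫ z, φ z • F (x - z) := by
    intro x
    rw [hGdefn, convolution_def]
    simp only [ContinuousLinearMap.lsmul_apply]
  -- global bound for G
  have hGglob : ∀ a b : Rn n, a ≠ b → ‖G a - G b‖ ≤ K * M * ω (dist a b) := by
    intro a b hab
    have hsub : G a - G b = ∫ z, φ z • (F (a - z) - F (b - z)) := by
      rw [hGdef a, hGdef b, ← MeasureTheory.integral_sub (hint1 a) (hint1 b)]
      simp only [smul_sub]
    rw [hsub]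
    have hωd : 0 < ω (dist a b) := hω_pos _ (dist_pos.2 hab)
    have hintd : MeasureTheory.Integrable (fun z => φ z • (F (a - z) - F (b - z))) volume := by
      have h := (hint1 a).sub (hint1 b)
      simp only [smul_sub]; exact h
    calc ‖∫ z, φ z • (F (a - z) - F (b - z))‖
        ≤ ∫ z, ‖φ z • (F (a - z) - F (b - z))‖ := norm_integral_le_integral_norm _
      _ ≤ ∫ z, φ z * (K * M * ω (dist a b)) := by
          apply MeasureTheory.integral_mono hintd.norm (φb.integrable_normed.mul_const _)
          intro z
          dsimp only
          rw [norm_smul, Real.norm_eq_abs, abs_of_nonneg (hφnn z)]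
          apply mul_le_mul_of_nonneg_left _ (hφnn z)
          have hab' : a - z ≠ b - z := fun hc => hab (by
            have := sub_left_inj.1 hc
            exact this)
          have hdd : dist (a - z) (b - z) = dist a b := dist_sub_right a b z
          calc ‖F (a - z) - F (b - z)‖ ≤ K * M * ω (dist (a - z) (b - z)) :=
                hFglob _ _ hab'
            _ = K * M * ω (dist a b) := by rw [hdd]
      _ = (∫ z, φ z) * (K * M * ω (dist a b)) := MeasureTheory.integral_mul_const _ _
      _ = K * M * ω (dist a b) := by rw [hφint, one_mul]
  -- small-scale bound for G on E
  have hKε0 : 0 ≤ K * ε₁ := mul_nonneg hK0.le hε₁0.le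
  have hGsmall : ∀ a ∈ E, ∀ b ∈ E, a ≠ b → dist a b ≤ r →
      ‖G a - G b‖ ≤ K * ε₁ * ω (dist a b) := by
    intro a ha b hb hab habr
    have hsub : G a - G b = ∫ z, φ z • (F (a - z) - F (b - z)) := by
      rw [hGdef a, hGdef b, ← MeasureTheory.integral_sub (hint1 a) (hint1 b)]
      simp only [smul_sub]
    rw [hsub]
    have hωd : 0 < ω (dist a b) := hω_pos _ (dist_pos.2 hab)
    have hintd : MeasureTheory.Integrable (fun z => φ z • (F (a - z) - F (b - z))) volume := by
      have h := (hint1 a).sub (hint1 b)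
      simp only [smul_sub]; exact h
    calc ‖∫ z, φ z • (F (a - z) - F (b - z))‖
        ≤ ∫ z, ‖φ z • (F (a - z) - F (b - z))‖ := norm_integral_le_integral_norm _
      _ ≤ ∫ z, φ z * (K * ε₁ * ω (dist a b)) := by
          apply MeasureTheory.integral_mono hintd.norm (φb.integrable_normed.mul_const _)
          intro z
          dsimp only
          rw [norm_smul, Real.norm_eq_abs, abs_of_nonneg (hφnn z)]
          by_cases hz : φ z = 0
          · rw [hz, zero_mul]
            exact mul_nonneg (φb.nonneg_normed z) (mul_nonneg hKε0 hωd.le)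
          · apply mul_le_mul_of_nonneg_left _ (hφnn z)
            have hzr : ‖z‖ < r := by
              have hmem : z ∈ Function.support φ := hz
              rwa [hφsupp, mem_ball_zero_iff] at hmem
            have hab' : a - z ≠ b - z := fun hc => hab (sub_left_inj.1 hc)
            have hdd : dist (a - z) (b - z) = dist a b := dist_sub_right a b z
            have hda : infDist (a - z) E ≤ ‖z‖ := by
              have h := infDist_le_dist_of_mem (x := a - z) ha
              rwa [dist_eq_norm, sub_sub_cancel_left, norm_neg] at h
            have hdb : infDist (b - z) E ≤ ‖z‖ := by
              have h := infDist_le_dist_of_mem (x := b - z) hb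
              rwa [dist_eq_norm, sub_sub_cancel_left, norm_neg] at h
            have h := hFloc (a - z) (b - z) hab' (by rw [hdd]; linarith)
            rw [hdd] at h
            exact h
      _ = (∫ z, φ z) * (K * ε₁ * ω (dist a b)) := MeasureTheory.integral_mul_const _ _
      _ = K * ε₁ * ω (dist a b) := by rw [hφint, one_mul]
  -- pointwise bound on E
  have hωr : 0 < ω r := hω_pos r hr0
  have hGpt : ∀ a ∈ E, ‖f a - G a‖ ≤ K * ε₁ * ω r := by
    intro a ha
    have h1 : MeasureTheory.Integrable (fun z => φ z • F a) volume :=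
      φb.integrable_normed.smul_const (F a)
    have h2 : ∫ z, φ z • F a = F a := by
      rw [integral_smul_const, hφint, one_smul]
    have hval : f a - G a = ∫ z, φ z • (F a - F (a - z)) := by
      have e : ∫ z, (φ z • F a - φ z • F (a - z)) = f a - G a := by
        rw [MeasureTheory.integral_sub h1 (hint1 a), h2, ← hGdef a, hFE a ha]
      rw [← e]
      simp only [smul_sub]
    rw [hval]
    have hintd : MeasureTheory.Integrable (fun z => φ z • (F a - F (a - z))) volume := by
      have h := h1.sub (hint1 a)
      simp only [smul_sub]; exact h
    calc ‖∫ z, φ z • (F a - F (a - z))‖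
        ≤ ∫ z, ‖φ z • (F a - F (a - z))‖ := norm_integral_le_integral_norm _
      _ ≤ ∫ z, φ z * (K * ε₁ * ω r) := by
          apply MeasureTheory.integral_mono hintd.norm (φb.integrable_normed.mul_const _)
          intro z
          dsimp only
          rw [norm_smul, Real.norm_eq_abs, abs_of_nonneg (hφnn z)]
          by_cases hz : φ z = 0
          · rw [hz, zero_mul]
            exact mul_nonneg (φb.nonneg_normed z) (mul_nonneg hKε0 hωr.le)
          · apply mul_le_mul_of_nonneg_left _ (hφnn z)
            have hzr : ‖z‖ < r := by
              have hmem : z ∈ Function.support φ := hz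
              rwa [hφsupp, mem_ball_zero_iff] at hmem
            by_cases hz0 : z = 0
            · rw [hz0, sub_zero, sub_self, norm_zero]
              exact mul_nonneg hKε0 hωr.le
            · have hne2 : a ≠ a - z := by
                intro hcontra
                exact hz0 (by
                  have := sub_eq_self.1 hcontra.symm
                  exact this)
              have hd1 : dist a (a - z) = ‖z‖ := by
                rw [dist_eq_norm, sub_sub_cancel]
              have hdE : infDist (a - z) E ≤ ‖z‖ := by
                have h := infDist_le_dist_of_mem (x := a - z) ha
                rwa [dist_eq_norm, sub_sub_cancel_left, norm_neg] at h
              have h := hFloc a (a - z) hne2 (by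
                rw [hd1, infDist_zero_of_mem ha]
                linarith)
              rw [hd1] at h
              calc ‖F a - F (a - z)‖ ≤ K * ε₁ * ω ‖z‖ := h
                _ ≤ K * ε₁ * ω r :=
                    mul_le_mul_of_nonneg_left (hω_mono _ _ (norm_pos_iff.2 hz0) hzr.le) hKε0
      _ = (∫ z, φ z) * (K * ε₁ * ω r) := MeasureTheory.integral_mul_const _ _
      _ = K * ε₁ * ω r := by rw [hφint, one_mul]
  -- pair bound for f - G on E
  have hfG : ∀ a ∈ E, ∀ b ∈ E, a ≠ b →
      ‖(f a - G a) - (f b - G b)‖ ≤ (ε / 2) * ω (dist a b) := by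
    intro a ha b hb hab
    have hωd : 0 < ω (dist a b) := hω_pos _ (dist_pos.2 hab)
    rcases le_or_gt (dist a b) r with hcase | hcase
    · have h1 : ‖f a - f b‖ ≤ ε₁ * ω (dist a b) := by
        have h := hδ a ha b hb hab (by
          rw [← dist_eq_norm]
          calc dist a b ≤ r := hcase
            _ ≤ δ := by rw [hrdef]; linarith)
        rwa [dist_eq_norm]
      have h2 := hGsmall a ha b hb hab hcase
      have htri : ‖(f a - G a) - (f b - G b)‖ ≤ ‖f a - f b‖ + ‖G a - G b‖ := by
        have he : (f a - G a) - (f b - G b) = (f a - f b) - (G a - G b) := by abel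
        rw [he]
        exact norm_sub_le _ _
      calc ‖(f a - G a) - (f b - G b)‖ ≤ ε₁ * ω (dist a b) + K * ε₁ * ω (dist a b) := by
            linarith
        _ = (1 + K) * ε₁ * ω (dist a b) := by ring
        _ ≤ (ε / 2) * ω (dist a b) := by
            apply mul_le_mul_of_nonneg_right _ hωd.le
            calc (1 + K) * ε₁ ≤ (1 + 2 * K) * ε₁ := by nlinarith [hK0.le, hε₁0.le]
              _ = ε / 2 := hkey₁
    · have h1 := hGpt a ha
      have h2 := hGpt b hb
      calc ‖(f a - G a) - (f b - G b)‖ ≤ ‖f a - G a‖ + ‖f b - G b‖ := norm_sub_le _ _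
        _ ≤ 2 * (K * ε₁ * ω r) := by linarith
        _ ≤ 2 * (K * ε₁ * ω (dist a b)) := by
            apply mul_le_mul_of_nonneg_left _ (by norm_num)
            exact mul_le_mul_of_nonneg_left (hω_mono _ _ hr0 hcase.le) hKε0
        _ = (2 * K) * ε₁ * ω (dist a b) := by ring
        _ ≤ (ε / 2) * ω (dist a b) := by
            apply mul_le_mul_of_nonneg_right _ hωd.le
            calc (2 * K) * ε₁ ≤ (1 + 2 * K) * ε₁ := by nlinarith [hε₁0.le]
              _ = ε / 2 := hkey₁
  -- smoothness
  have hsm : ∀ j : ℕ, ContDiff ℝ j G := by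
    intro j
    rw [hGdefn]
    exact HasCompactSupport.contDiff_convolution_left _ hφs (φb.contDiff_normed) hFli
  -- Lipschitz
  obtain ⟨Lφ, hLφ⟩ := ContDiff.lipschitzWith_of_hasCompactSupport hφs
    (φb.contDiff_normed (n := 1)) one_ne_zero
  have hrep : ∀ x : Rn n, G x = ∫ w, φ (x - w) • F w := by
    intro x
    have h := MeasureTheory.integral_sub_left_eq_self (fun w => φ (x - w) • F w) volume x
    simp only [sub_sub_cancel] at h
    rw [hGdef x, ← h]
  have hφint1 : ∀ x : Rn n, ∫ w, φ (x - w) = 1 := by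
    intro x
    have h := MeasureTheory.integral_sub_left_eq_self (fun w => φ w) volume x
    rw [h, hφint]
  have hcs : ∀ x : Rn n, ∀ g : Rn n → V, Continuous g →
      MeasureTheory.Integrable (fun w => φ (x - w) • g w) volume := by
    intro x g hg
    apply Continuous.integrable_of_hasCompactSupport
    · exact (hφc.comp (continuous_const.sub continuous_id)).smul hg
    · apply HasCompactSupport.intro (isCompact_closedBall x r)
      intro w hw
      have h0 : φ (x - w) = 0 := by
        rw [← Function.notMem_support, hφsupp, mem_ball_zero_iff]
        intro hc
        apply hw
        rw [mem_closedBall, dist_comm, dist_eq_norm]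
        exact hc.le
      rw [h0, zero_smul]
  set L1 := (Lφ : ℝ) * (K * M * ω (2 * r)) * (volume (ball (0 : Rn n) (2 * r))).toReal with hL1
  set L2 := K * M * Cω * ω r / r with hL2
  have hω2r : 0 < ω (2 * r) := hω_pos _ (by linarith)
  have hGl1 : ∀ a b : Rn n, dist a b ≤ r → ‖G a - G b‖ ≤ L1 * dist a b := by
    intro a b hler
    have hdiff : G a - G b = ∫ w, (φ (a - w) - φ (b - w)) • (F w - F a) := by
      have hia := hcs a F hFc
      have hib := hcs b F hFc
      have hia2 : MeasureTheory.Integrable (fun w => φ (a - w) • F a) volume :=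
        hcs a (fun _ => F a) continuous_const
      have hib2 : MeasureTheory.Integrable (fun w => φ (b - w) • F a) volume :=
        hcs b (fun _ => F a) continuous_const
      have hia3 : MeasureTheory.Integrable (fun w => φ (a - w) • F w - φ (a - w) • F a) volume :=
        hia.sub hia2
      have hib3 : MeasureTheory.Integrable (fun w => φ (b - w) • F w - φ (b - w) • F a) volume :=
        hib.sub hib2
      have e1 : ∫ w, φ (a - w) • F a = F a := by
        rw [integral_smul_const, hφint1 a, one_smul]
      have e2 : ∫ w, φ (b - w) • F a = F a := by
        rw [integral_smul_const, hφint1 b, one_smul]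
      calc G a - G b = (∫ w, φ (a - w) • F w) - (∫ w, φ (b - w) • F w) := by
            rw [hrep a, hrep b]
        _ = ((∫ w, φ (a - w) • F w) - F a) - ((∫ w, φ (b - w) • F w) - F a) := by abel
        _ = (∫ w, (φ (a - w) • F w - φ (a - w) • F a))
            - (∫ w, (φ (b - w) • F w - φ (b - w) • F a)) := by
            rw [MeasureTheory.integral_sub hia hia2, MeasureTheory.integral_sub hib hib2, e1, e2]
        _ = ∫ w, ((φ (a - w) • F w - φ (a - w) • F a) - (φ (b - w) • F w - φ (b - w) • F a)) := by
            rw [← MeasureTheory.integral_sub hia3 hib3]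
        _ = ∫ w, (φ (a - w) - φ (b - w)) • (F w - F a) := by
            congr 1
            funext w
            rw [sub_smul, smul_sub, smul_sub]
    rw [hdiff]
    have hsupp2 : Function.support (fun w => (φ (a - w) - φ (b - w)) • (F w - F a))
        ⊆ ball a (2 * r) := by
      intro w hw
      by_contra hwb
      apply hw
      show (φ (a - w) - φ (b - w)) • (F w - F a) = 0
      have hwa : 2 * r ≤ dist w a := not_lt.1 (fun hc => hwb (mem_ball.2 hc))
      have h1 : φ (a - w) = 0 := by
        rw [← Function.notMem_support, hφsupp, mem_ball_zero_iff]
        intro hc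
        rw [← dist_eq_norm, dist_comm] at hc
        linarith
      have h2 : φ (b - w) = 0 := by
        rw [← Function.notMem_support, hφsupp, mem_ball_zero_iff]
        intro hc
        rw [← dist_eq_norm, dist_comm] at hc
        have htr : dist w a ≤ dist w b + dist b a := dist_triangle _ _ _
        have : dist b a ≤ r := by rw [dist_comm]; exact hler
        linarith
      rw [h1, h2, sub_self, zero_smul]
    have hind : (fun w => (φ (a - w) - φ (b - w)) • (F w - F a))
        = (ball a (2 * r)).indicator (fun w => (φ (a - w) - φ (b - w)) • (F w - F a)) :=
      (Set.indicator_eq_self.2 hsupp2).symm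
    rw [hind, MeasureTheory.integral_indicator measurableSet_ball]
    have hple : ∀ w ∈ ball a (2 * r), ‖(φ (a - w) - φ (b - w)) • (F w - F a)‖
        ≤ (Lφ : ℝ) * dist a b * (K * M * ω (2 * r)) := by
      intro w hw
      rw [norm_smul, Real.norm_eq_abs]
      have hphi : |φ (a - w) - φ (b - w)| ≤ (Lφ : ℝ) * dist a b := by
        have h := hLφ.dist_le_mul (a - w) (b - w)
        rw [Real.dist_eq] at h
        calc |φ (a - w) - φ (b - w)| ≤ (Lφ : ℝ) * dist (a - w) (b - w) := h
          _ = (Lφ : ℝ) * dist a b := by rw [dist_sub_right]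
      have hFb : ‖F w - F a‖ ≤ K * M * ω (2 * r) := by
        rcases eq_or_ne w a with rfl | hwa
        · rw [sub_self, norm_zero]
          exact mul_nonneg hKM0 hω2r.le
        · have hlt : dist w a < 2 * r := mem_ball.1 hw
          calc ‖F w - F a‖ ≤ K * M * ω (dist w a) := hFglob w a hwa
            _ ≤ K * M * ω (2 * r) :=
                mul_le_mul_of_nonneg_left (hω_mono _ _ (dist_pos.2 hwa) hlt.le) hKM0
      calc |φ (a - w) - φ (b - w)| * ‖F w - F a‖
          ≤ ((Lφ : ℝ) * dist a b) * (K * M * ω (2 * r)) :=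
            mul_le_mul hphi hFb (norm_nonneg _) (by positivity)
        _ = (Lφ : ℝ) * dist a b * (K * M * ω (2 * r)) := by ring
    calc ‖∫ w in ball a (2 * r), (φ (a - w) - φ (b - w)) • (F w - F a)‖
        ≤ ((Lφ : ℝ) * dist a b * (K * M * ω (2 * r))) * (volume (ball a (2 * r))).toReal :=
          norm_setIntegral_le_of_norm_le_const measure_ball_lt_top hple
      _ = L1 * dist a b := by
          rw [hL1, Measure.addHaar_ball_center volume a]
          ring
  have hGl2 : ∀ a b : Rn n, r ≤ dist a b → ‖G a - G b‖ ≤ L2 * dist a b := by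
    intro a b hler
    have hab : a ≠ b := by
      intro hc
      rw [hc, dist_self] at hler
      linarith
    have h1 := hGglob a b hab
    have h2 : ω (dist a b) * r ≤ Cω * dist a b * ω r := omega_scale hω_pos hωq hr0 hler
    rw [hL2, div_mul_eq_mul_div, le_div_iff₀ hr0]
    nlinarith [mul_le_mul_of_nonneg_left h2 hKM0]
  have hLip : ∃ L : NNReal, LipschitzWith L G := by
    refine ⟨Real.toNNReal (max L1 L2), ?_⟩
    apply LipschitzWith.of_dist_le_mul
    intro a b
    have hcoe : (Real.toNNReal (max L1 L2) : ℝ) = max (max L1 L2) 0 := Real.coe_toNNReal' _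
    rcases eq_or_ne a b with rfl | hab
    · simp
    · rw [dist_eq_norm (G a) (G b), hcoe]
      rcases le_total (dist a b) r with hc | hc
      · calc ‖G a - G b‖ ≤ L1 * dist a b := hGl1 a b hc
          _ ≤ max (max L1 L2) 0 * dist a b := by
              apply mul_le_mul_of_nonneg_right _ dist_nonneg
              exact le_max_of_le_left (le_max_left _ _)
      · calc ‖G a - G b‖ ≤ L2 * dist a b := hGl2 a b hc
          _ ≤ max (max L1 L2) 0 * dist a b := by
              apply mul_le_mul_of_nonneg_right _ dist_nonneg
              exact le_max_of_le_left (le_max_right _ _)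
  -- conclusion
  obtain ⟨hmem1, hnorm1⟩ := ratio_bound hω_pos G Set.univ hKM0
    (fun a _ b _ hab => by
      rw [← dist_eq_norm a b]
      exact hGglob a b hab)
  obtain ⟨hmem2, hnorm2⟩ := ratio_bound (c := ε / 2) hω_pos (fun x => f x - G x) E
    (by positivity)
    (fun a ha b hb hab => by
      show ‖(f a - G a) - (f b - G b)‖ ≤ ε / 2 * ω ‖a - b‖
      rw [← dist_eq_norm a b]
      exact hfG a ha b hb hab)
  exact ⟨G, hLip, hsm, hmem1, hmem2, lt_of_le_of_lt hnorm2 (by linarith), hnorm1⟩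
end
end
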